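/- arXiv:1601.04091 — 11 statements merged into one kernel-verified Lean document; each statement's English description precedes it below -/
import Mathlib

section
/- Let H be a real Hilbert space and let K_1, ..., K_N be closed subspaces with K_1 + ... + K_N = H, with P_i the orthogonal projection onto K_i. Suppose the quantity c_0 := sup over v with ||v|| = 1 of the infimum, over all decompositions v = Σ_{i=1}^N v_i with v_i ∈ K_i, of Σ_{i=1}^N || P_i Σ_{j=i+1}^N v_j ||², is finite. Then the operator norm of the error propagation operator satisfies || (I - P_N)(I - P_{N-1}) ··· (I - P_1) ||² = 1 - 1/(1 + c_0) (the Xu–Zikatanov identity). -/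
open RealInnerProductSpace

/-!
Write `E k = (1 - P (k-1)) ⋯ (1 - P 0)` and `A i = P i ∘ E i`. Telescoping gives
`‖v‖² - ‖E N v‖² = ∑ ‖A i v‖²`, and summation by parts gives, for `w i ∈ K i`,
`⟪v, ∑ w⟫ = ∑ ⟪A i v, w i + P i (∑ j > i, w j)⟫` with
`∑ ‖w i + P i (∑ j > i, w j)‖² = ‖∑ w‖² + ∑ ‖P i (∑ j > i, w j)‖²`.
By Cauchy–Schwarz every decomposition of a unit vector `v` therefore costs at least
`1 / ∑ ‖A i v‖² - 1`, whence `‖E N‖² ≤ 1 - 1 / (1 + c₀)`.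
Conversely, with `δ = 1 - ‖E N‖²` the form `∑ ⟪A i u, A i u'⟫` is `δ`-coercive, so by
Lax–Milgram each unit `v` is represented by some `u`; solving the triangular system
`w i + P i (∑ j > i, w j) = A i u` backwards gives a decomposition of `v` of cost at most
`1 / δ - 1`, whence `c₀ ≤ 1 / δ - 1`.
-/

theorem Submodule.eq_starProjection_of_isSymmetric {𝕜 E : Type*} [RCLike 𝕜]
    [NormedAddCommGroup E] [InnerProductSpace 𝕜 E] {K : Submodule 𝕜 E}
    [K.HasOrthogonalProjection] {P : E →L[𝕜] E} (hmem : ∀ x, P x ∈ K)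
    (hid : ∀ x ∈ K, P x = x) (hsym : ∀ x y, inner 𝕜 (P x) y = inner 𝕜 x (P y)) :
    P = K.starProjection :=
  ContinuousLinearMap.ext fun x => Eq.symm <|
    K.eq_starProjection_of_mem_of_inner_eq_zero (hmem x) fun w hw => by
      rw [inner_sub_left, hsym, hid w hw, sub_self]

noncomputable section

namespace XuZikatanov

open Finset

variable {N : ℕ}

section Telescoping

variable {M : Type*}

theorem sum_fin_sub_succ [AddCommGroup M] (f : ℕ → M) :
    ∑ i : Fin N, (f i - f (i + 1)) = f 0 - f N := by
  rw [Fin.sum_univ_eq_sum_range (fun i => f i - f (i + 1)), sum_range_sub']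

/-- Indexed by `ℕ`, so that summation by parts over `Fin N` reduces to `sum_fin_sub_succ`. -/
def tailSum [AddCommMonoid M] (w : Fin N → M) (k : ℕ) : M := ∑ j with k ≤ j.val, w j

variable [AddCommMonoid M] (w : Fin N → M)

theorem tailSum_zero : tailSum w 0 = ∑ j, w j := by simp [tailSum]

theorem tailSum_eq_zero_of_le {k : ℕ} (hk : N ≤ k) : tailSum w k = 0 :=
  sum_eq_zero fun j hj => absurd (mem_filter.1 hj).2 (by have := j.isLt; omega)

theorem tailSum_succ_eq_sum_Ioi (i : Fin N) : tailSum w (i + 1) = ∑ j ∈ Ioi i, w j := by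
  unfold tailSum
  congr 1
  ext j
  simp only [mem_filter, mem_univ, true_and, mem_Ioi, Fin.lt_def]
  omega

theorem tailSum_eq_add_tailSum_succ (i : Fin N) : tailSum w i = w i + tailSum w (i + 1) := by
  rw [tailSum_succ_eq_sum_Ioi, ← sum_cons (f := w) notMem_Ioi_self, ← Ici_eq_cons_Ioi]
  unfold tailSum
  congr 1
  ext j
  simp only [mem_filter, mem_univ, true_and, mem_Ici, Fin.le_def]

end Telescoping

def backSolve {M : Type*} [AddCommGroup M] (P : Fin N → M → M) (z : Fin N → M)
    (i : Fin N) : M :=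
  z i - P i (∑ j : Ioi i, backSolve P z j)
termination_by N - i
decreasing_by have := j.2; simp only [mem_Ioi, Fin.lt_def] at this; omega

theorem backSolve_add {M : Type*} [AddCommGroup M] (P : Fin N → M → M) (z : Fin N → M)
    (i : Fin N) : backSolve P z i + P i (∑ j ∈ Ioi i, backSolve P z j) = z i := by
  rw [backSolve, sum_coe_sort, sub_add_cancel]

/-- `errorProp P k = (1 - P (k-1)) * ⋯ * (1 - P 0)`, the full product once `N ≤ k`. -/
def errorProp {R : Type*} [Ring R] (P : Fin N → R) (k : ℕ) : R :=
  ((List.ofFn fun i => 1 - P i).take k).reverse.prod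

section ErrorProp

variable {R : Type*} [Ring R] (P : Fin N → R)

theorem errorProp_zero : errorProp P 0 = 1 := by simp [errorProp]

theorem errorProp_succ (i : Fin N) : errorProp P (i + 1) = (1 - P i) * errorProp P i := by
  simp [errorProp, List.take_add_one]

theorem errorProp_eq_prod : errorProp P N = (List.ofFn fun i => 1 - P i).reverse.prod := by
  rw [errorProp, List.take_of_length_le (by simp)]

end ErrorProp

theorem sq_sum_inner_le {ι E : Type*} [NormedAddCommGroup E] [InnerProductSpace ℝ E]
    (s : Finset ι) (x y : ι → E) :
    (∑ i ∈ s, ⟪x i, y i⟫) ^ 2 ≤ (∑ i ∈ s, ‖x i‖ ^ 2) * ∑ i ∈ s, ‖y i‖ ^ 2 :=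
  calc (∑ i ∈ s, ⟪x i, y i⟫) ^ 2 = |∑ i ∈ s, ⟪x i, y i⟫| ^ 2 := (sq_abs _).symm
    _ ≤ (∑ i ∈ s, ‖x i‖ * ‖y i‖) ^ 2 := by
      gcongr
      exact (abs_sum_le_sum_abs _ _).trans (sum_le_sum fun i _ => abs_real_inner_le_norm _ _)
    _ ≤ _ := sum_mul_sq_le_sq_mul_sq _ _ _

section Projection

variable {H : Type*} [NormedAddCommGroup H] [InnerProductSpace ℝ H]
  (K : Fin N → Submodule ℝ H) [∀ i, (K i).HasOrthogonalProjection]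

local notation "𝓔" => errorProp fun j => Submodule.starProjection (K j)

def subspaceCorrection (i : Fin N) : H →L[ℝ] H := (K i).starProjection * 𝓔 i

def decompCost (w : Fin N → H) : ℝ := ∑ i, ‖(K i).starProjection (∑ j ∈ Ioi i, w j)‖ ^ 2

def infDecompCost (v : H) : ℝ :=
  sInf {s : ℝ | ∃ w : Fin N → H, (∀ i, w i ∈ K i) ∧ ∑ i, w i = v ∧ s = decompCost K w}

def xuZikatanovConst : ℝ := sSup {t : ℝ | ∃ v : H, ‖v‖ = 1 ∧ t = infDecompCost K v}

theorem subspaceCorrection_mem (i : Fin N) (v : H) : subspaceCorrection K i v ∈ K i :=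
  Submodule.starProjection_apply_mem _ _

theorem errorProp_succ_apply (i : Fin N) (v : H) :
    𝓔 (i + 1) v = 𝓔 i v - subspaceCorrection K i v := by
  rw [errorProp_succ, subspaceCorrection, sub_mul, one_mul]
  rfl

theorem norm_sq_sub_norm_sq_errorProp (v : H) :
    ‖v‖ ^ 2 - ‖𝓔 N v‖ ^ 2 = ∑ i, ‖subspaceCorrection K i v‖ ^ 2 := by
  have hstep (i : Fin N) :
      ‖𝓔 i v‖ ^ 2 - ‖𝓔 (i + 1) v‖ ^ 2 = ‖subspaceCorrection K i v‖ ^ 2 := by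
    rw [errorProp_succ_apply, subspaceCorrection, mul_apply_eq_comp,
      ← Submodule.starProjection_orthogonal_val,
      Submodule.norm_sq_eq_add_norm_sq_starProjection (𝓔 i v) (K i)]
    ring
  rw [← sum_congr rfl fun i _ => hstep i, sum_fin_sub_succ fun k => ‖𝓔 k v‖ ^ 2,
    errorProp_zero, one_apply_eq_self]

theorem inner_sum_eq_sum_inner_subspaceCorrection {w : Fin N → H} (hw : ∀ i, w i ∈ K i)
    (v : H) : ⟪v, ∑ i, w i⟫ =
      ∑ i, ⟪subspaceCorrection K i v, w i + (K i).starProjection (∑ j ∈ Ioi i, w j)⟫ := by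
  have hstep (i : Fin N) : ⟪𝓔 i v, tailSum w i⟫ - ⟪𝓔 (i + 1) v, tailSum w (i + 1)⟫ =
      ⟪subspaceCorrection K i v, w i + (K i).starProjection (∑ j ∈ Ioi i, w j)⟫ := by
    rw [tailSum_eq_add_tailSum_succ w i, errorProp_succ_apply, tailSum_succ_eq_sum_Ioi,
      subspaceCorrection, mul_apply_eq_comp]
    set u := 𝓔 i v
    set t := ∑ j ∈ Ioi i, w j
    have hu : ⟪u, w i⟫ = ⟪(K i).starProjection u, w i⟫ := by
      rw [Submodule.inner_starProjection_left_eq_right,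
        Submodule.starProjection_eq_self_iff.2 (hw i)]
    have ht : ⟪(K i).starProjection u, t⟫ =
        ⟪(K i).starProjection u, (K i).starProjection t⟫ := by
      rw [← Submodule.inner_starProjection_left_eq_right,
        Submodule.starProjection_eq_self_iff.2 (Submodule.starProjection_apply_mem _ _)]
    rw [inner_add_right, inner_sub_left, inner_add_right, hu, ht]
    ring
  rw [← sum_congr rfl fun i _ => hstep i, sum_fin_sub_succ fun k => ⟪𝓔 k v, tailSum w k⟫,
    tailSum_zero, tailSum_eq_zero_of_le w le_rfl, errorProp_zero, inner_zero_right, sub_zero,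
    one_apply_eq_self]

theorem sum_norm_sq_add_starProjection_eq_add_decompCost {w : Fin N → H} (hw : ∀ i, w i ∈ K i) :
    ∑ i, ‖w i + (K i).starProjection (∑ j ∈ Ioi i, w j)‖ ^ 2 =
      ‖∑ i, w i‖ ^ 2 + decompCost K w := by
  have hstep (i : Fin N) : ‖w i + (K i).starProjection (∑ j ∈ Ioi i, w j)‖ ^ 2 =
      (‖tailSum w i‖ ^ 2 - ‖tailSum w (i + 1)‖ ^ 2)
        + ‖(K i).starProjection (∑ j ∈ Ioi i, w j)‖ ^ 2 := by
    rw [tailSum_eq_add_tailSum_succ w i, tailSum_succ_eq_sum_Ioi]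
    set t := ∑ j ∈ Ioi i, w j
    have hwt : ⟪w i, (K i).starProjection t⟫ = ⟪w i, t⟫ := by
      rw [← Submodule.inner_starProjection_left_eq_right,
        Submodule.starProjection_eq_self_iff.2 (hw i)]
    rw [norm_add_sq_real, norm_add_sq_real, hwt]
    ring
  rw [sum_congr rfl fun i _ => hstep i, sum_add_distrib,
    sum_fin_sub_succ fun k => ‖tailSum w k‖ ^ 2, tailSum_zero, tailSum_eq_zero_of_le w le_rfl,
    norm_zero, decompCost]
  ring

theorem sq_inner_sum_le_mul {w : Fin N → H} (hw : ∀ i, w i ∈ K i) (v : H) :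
    ⟪v, ∑ i, w i⟫ ^ 2 ≤
      (∑ i, ‖subspaceCorrection K i v‖ ^ 2) * (‖∑ i, w i‖ ^ 2 + decompCost K w) := by
  rw [inner_sum_eq_sum_inner_subspaceCorrection K hw,
    ← sum_norm_sq_add_starProjection_eq_add_decompCost K hw]
  exact sq_sum_inner_le univ _ _

theorem backSolve_mem {z : Fin N → H} (hz : ∀ i, z i ∈ K i) (i : Fin N) :
    backSolve (fun j => ⇑(K j).starProjection) z i ∈ K i := by
  rw [backSolve]
  exact sub_mem (hz i) (Submodule.starProjection_apply_mem _ _)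

theorem exists_decomp_of_coercive [CompleteSpace H] {δ : ℝ} (hδ : 0 < δ)
    (hcoer : ∀ u, δ * ‖u‖ ^ 2 ≤ ∑ i, ‖subspaceCorrection K i u‖ ^ 2) (v : H) :
    ∃ w : Fin N → H, (∀ i, w i ∈ K i) ∧ ∑ i, w i = v ∧
      ‖v‖ ^ 2 + decompCost K w ≤ ‖v‖ ^ 2 / δ := by
  let B : H →L[ℝ] H →L[ℝ] ℝ :=
    ∑ i, (innerSL ℝ).bilinearComp (subspaceCorrection K i) (subspaceCorrection K i)
  have hB (u u' : H) :
      B u u' = ∑ i, ⟪subspaceCorrection K i u, subspaceCorrection K i u'⟫ := by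
    simp [B]
  have hBcoer : IsCoercive B :=
    ⟨δ, hδ, fun u => by simpa [hB, real_inner_self_eq_norm_sq, mul_assoc, ← sq] using hcoer u⟩
  obtain ⟨u, hu⟩ := hBcoer.continuousLinearEquivOfBilin.surjective v
  have hvu (u' : H) : ⟪v, u'⟫ = B u u' := by
    rw [← hu, IsCoercive.continuousLinearEquivOfBilin_apply]
  set w := backSolve (fun j => ⇑(K j).starProjection) fun i => subspaceCorrection K i u
  have hwK : ∀ i, w i ∈ K i := backSolve_mem K fun i => subspaceCorrection_mem K i u
  have hw (i : Fin N) :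
      w i + (K i).starProjection (∑ j ∈ Ioi i, w j) = subspaceCorrection K i u :=
    backSolve_add _ _ i
  have hsum : ∑ i, w i = v := ext_inner_left ℝ fun u' => by
    simp only [inner_sum_eq_sum_inner_subspaceCorrection K hwK, hw, hvu, hB, real_inner_comm]
  refine ⟨w, hwK, hsum, ?_⟩
  have hcost : ‖v‖ ^ 2 + decompCost K w = ⟪v, u⟫ := by
    rw [← hsum, ← sum_norm_sq_add_starProjection_eq_add_decompCost K hwK, hsum, hvu, hB]
    simp only [hw, real_inner_self_eq_norm_sq]
  have hlow : δ * ‖u‖ ^ 2 ≤ ⟪v, u⟫ := by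
    rw [hvu, hB]
    simpa only [real_inner_self_eq_norm_sq] using hcoer u
  have hup := real_inner_le_norm v u
  rw [hcost, le_div_iff₀ hδ]
  nlinarith [sq_nonneg (‖v‖ - δ * ‖u‖), norm_nonneg u, norm_nonneg v]

theorem decompCost_nonneg (w : Fin N → H) : 0 ≤ decompCost K w :=
  sum_nonneg fun _ _ => sq_nonneg _

theorem infDecompCost_le {v : H} {w : Fin N → H} (hw : ∀ i, w i ∈ K i)
    (hsum : ∑ i, w i = v) : infDecompCost K v ≤ decompCost K w :=
  csInf_le ⟨0, by rintro _ ⟨w, -, -, rfl⟩; exact decompCost_nonneg K w⟩ ⟨w, hw, hsum, rfl⟩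

theorem xuZikatanovConst_nonneg : 0 ≤ xuZikatanovConst K :=
  Real.sSup_nonneg <| by
    rintro _ ⟨v, -, rfl⟩
    exact Real.sInf_nonneg <| by rintro _ ⟨w, -, -, rfl⟩; exact decompCost_nonneg K w

theorem sub_norm_sq_errorProp_mul_le (u : H) :
    (1 - ‖𝓔 N‖ ^ 2) * ‖u‖ ^ 2 ≤ ∑ i, ‖subspaceCorrection K i u‖ ^ 2 := by
  have hle : ‖𝓔 N u‖ ^ 2 ≤ ‖𝓔 N‖ ^ 2 * ‖u‖ ^ 2 := by
    rw [← mul_pow]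
    gcongr
    exact (𝓔 N).le_opNorm u
  rw [← norm_sq_sub_norm_sq_errorProp]
  linarith

theorem xuZikatanovConst_le [CompleteSpace H] (hδ : 0 < 1 - ‖𝓔 N‖ ^ 2) :
    xuZikatanovConst K ≤ 1 / (1 - ‖𝓔 N‖ ^ 2) - 1 := by
  have hδ1 : 1 - ‖𝓔 N‖ ^ 2 ≤ 1 := by linarith [sq_nonneg ‖𝓔 N‖]
  refine Real.sSup_le ?_ (sub_nonneg.2 (one_le_one_div hδ hδ1))
  rintro _ ⟨v, hv, rfl⟩
  obtain ⟨w, hw, hsum, hle⟩ :=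
    exists_decomp_of_coercive K hδ (sub_norm_sq_errorProp_mul_le K) v
  rw [hv] at hle
  linarith [infDecompCost_le K hw hsum]

variable {K}

theorem one_div_one_add_xuZikatanovConst_le
    (hdec : ∀ v : H, ∃ w : Fin N → H, (∀ i, w i ∈ K i) ∧ ∑ i, w i = v)
    (hbdd : BddAbove {t : ℝ | ∃ v : H, ‖v‖ = 1 ∧ t = infDecompCost K v})
    {v : H} (hv : ‖v‖ = 1) :
    1 / (1 + xuZikatanovConst K) ≤ ∑ i, ‖subspaceCorrection K i v‖ ^ 2 := by
  set D := ∑ i, ‖subspaceCorrection K i v‖ ^ 2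
  have hCS {w : Fin N → H} (hw : ∀ i, w i ∈ K i) (hsum : ∑ i, w i = v) :
      1 ≤ D * (1 + decompCost K w) := by
    simpa [hsum, real_inner_self_eq_norm_sq, hv] using sq_inner_sum_le_mul K hw v
  obtain ⟨w₀, hw₀, hsum₀⟩ := hdec v
  have hD : 0 < D := by
    have := hCS hw₀ hsum₀
    have := decompCost_nonneg K w₀
    by_contra! hD
    nlinarith
  have hinf : 1 / D - 1 ≤ infDecompCost K v := by
    refine le_csInf ⟨_, w₀, hw₀, hsum₀, rfl⟩ ?_
    rintro _ ⟨w, hw, hsum, rfl⟩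
    rw [div_sub_one hD.ne', div_le_iff₀ hD]
    linarith [hCS hw hsum]
  have hsup : infDecompCost K v ≤ xuZikatanovConst K := le_csSup hbdd ⟨v, hv, rfl⟩
  rw [one_div_le (by linarith [xuZikatanovConst_nonneg K]) hD]
  linarith

theorem norm_sq_errorProp_le
    (hdec : ∀ v : H, ∃ w : Fin N → H, (∀ i, w i ∈ K i) ∧ ∑ i, w i = v)
    (hbdd : BddAbove {t : ℝ | ∃ v : H, ‖v‖ = 1 ∧ t = infDecompCost K v}) :
    ‖𝓔 N‖ ^ 2 ≤ 1 - 1 / (1 + xuZikatanovConst K) := by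
  have hκ : 0 ≤ 1 - 1 / (1 + xuZikatanovConst K) := by
    rw [sub_nonneg, div_le_one (by linarith [xuZikatanovConst_nonneg K])]
    linarith [xuZikatanovConst_nonneg K]
  have hnorm : ‖𝓔 N‖ ≤ √(1 - 1 / (1 + xuZikatanovConst K)) := by
    refine ContinuousLinearMap.opNorm_le_of_unit_norm (Real.sqrt_nonneg _) fun v hv => ?_
    rw [Real.le_sqrt (norm_nonneg _) hκ]
    have htel := norm_sq_sub_norm_sq_errorProp K v
    rw [hv] at htel
    linarith [one_div_one_add_xuZikatanovConst_le hdec hbdd hv]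
  calc ‖𝓔 N‖ ^ 2 ≤ √(1 - 1 / (1 + xuZikatanovConst K)) ^ 2 := by gcongr
    _ = 1 - 1 / (1 + xuZikatanovConst K) := Real.sq_sqrt hκ

theorem norm_sq_errorProp_eq [CompleteSpace H]
    (hdec : ∀ v : H, ∃ w : Fin N → H, (∀ i, w i ∈ K i) ∧ ∑ i, w i = v)
    (hbdd : BddAbove {t : ℝ | ∃ v : H, ‖v‖ = 1 ∧ t = infDecompCost K v}) :
    ‖𝓔 N‖ ^ 2 = 1 - 1 / (1 + xuZikatanovConst K) := by
  have hc := xuZikatanovConst_nonneg K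
  have hupper := norm_sq_errorProp_le hdec hbdd
  have hδ : 0 < 1 - ‖𝓔 N‖ ^ 2 := by
    have : 0 < 1 / (1 + xuZikatanovConst K) := by positivity
    linarith
  have hlower : 1 - ‖𝓔 N‖ ^ 2 ≤ 1 / (1 + xuZikatanovConst K) := by
    rw [le_one_div hδ (by linarith)]
    linarith [xuZikatanovConst_le K hδ]
  linarith

end Projection

end XuZikatanov

end

/-- Xu–Zikatanov identity: for closed subspaces `K 1, ..., K N` whose sum is `H`,
with `P i` the orthogonal projection onto `K i`, the squared norm of the error
propagation operator `(I - P_N) ⋯ (I - P_1)` equals `1 - 1/(1 + c₀)`. -/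
theorem xu_zikatanov_identity
    {H : Type*} [NormedAddCommGroup H] [InnerProductSpace ℝ H] [CompleteSpace H]
    (N : ℕ) (K : Fin N → Submodule ℝ H) (hK : ∀ i, IsClosed ((K i : Set H)))
    (hdec : ∀ v : H, ∃ w : Fin N → H, (∀ i, w i ∈ K i) ∧ ∑ i, w i = v)
    (P : Fin N → H →L[ℝ] H)
    (hPmem : ∀ i x, P i x ∈ K i)
    (hPid : ∀ i, ∀ x ∈ K i, P i x = x)
    (hPsym : ∀ i x y, ⟪P i x, y⟫ = ⟪x, P i y⟫)
    (c0 : ℝ)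
    (hc0 : c0 = sSup {t : ℝ | ∃ v : H, ‖v‖ = 1 ∧
      t = sInf {s : ℝ | ∃ w : Fin N → H, (∀ i, w i ∈ K i) ∧ ∑ i, w i = v ∧
        s = ∑ i, ‖P i (∑ j ∈ Finset.Ioi i, w j)‖ ^ 2}})
    (hbdd : BddAbove {t : ℝ | ∃ v : H, ‖v‖ = 1 ∧
      t = sInf {s : ℝ | ∃ w : Fin N → H, (∀ i, w i ∈ K i) ∧ ∑ i, w i = v ∧
        s = ∑ i, ‖P i (∑ j ∈ Finset.Ioi i, w j)‖ ^ 2}}) :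
    ‖(List.ofFn (fun i : Fin N => (1 : H →L[ℝ] H) - P i)).reverse.prod‖ ^ 2
      = 1 - 1 / (1 + c0) := by
  have : ∀ i, CompleteSpace (K i) := fun i => (hK i).completeSpace_coe
  obtain rfl : P = fun i => (K i).starProjection :=
    funext fun i => Submodule.eq_starProjection_of_isSymmetric (hPmem i) (hPid i) (hPsym i)
  subst hc0
  rw [← XuZikatanov.errorProp_eq_prod]
  exact XuZikatanov.norm_sq_errorProp_eq hdec hbdd
end

section
/- Let H be a real Hilbert space and K_1, ..., K_N closed subspaces with orthogonal projections P_i onto K_i. Assume the strengthened Cauchy–Schwarz inequality: there is C_S > 0 such that for all u_i ∈ K_i and v_j ∈ K_j, Σ_{i=1}^N Σ_{j=i+1}^N (u_i, v_j) ≤ C_S^{1/2} (Σ_{i=1}^N ||u_i||²)^{1/2} (Σ_{j=1}^N ||v_j||²)^{1/2}. Then for any choice of v_j ∈ K_j (j = 1, ..., N), setting u_i := P_i Σ_{j=i+1}^N v_j, one has Σ_{i=1}^N ||u_i||² ≤ C_S Σ_{i=1}^N ||v_i||². -/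
open RealInnerProductSpace

/-- Under the strengthened Cauchy–Schwarz inequality, setting
`u i := P i (∑_{j>i} v j)` one has `∑ ‖u i‖² ≤ C_S ∑ ‖v i‖²`. -/
theorem scs_projection_bound
    {H : Type*} [NormedAddCommGroup H] [InnerProductSpace ℝ H] [CompleteSpace H]
    (N : ℕ) (K : Fin N → Submodule ℝ H) (hK : ∀ i, IsClosed ((K i : Set H)))
    (P : Fin N → H →L[ℝ] H)
    (hPmem : ∀ i x, P i x ∈ K i)
    (hPid : ∀ i, ∀ x ∈ K i, P i x = x)
    (hPsym : ∀ i x y, ⟪P i x, y⟫ = ⟪x, P i y⟫)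
    (CS : ℝ) (hCS : 0 < CS)
    (hSCS : ∀ u v : Fin N → H, (∀ i, u i ∈ K i) → (∀ j, v j ∈ K j) →
      ∑ i, ∑ j ∈ Finset.Ioi i, ⟪u i, v j⟫ ≤
        Real.sqrt CS * Real.sqrt (∑ i, ‖u i‖ ^ 2) * Real.sqrt (∑ j, ‖v j‖ ^ 2))
    (v : Fin N → H) (hv : ∀ j, v j ∈ K j) :
    ∑ i, ‖P i (∑ j ∈ Finset.Ioi i, v j)‖ ^ 2 ≤ CS * ∑ i, ‖v i‖ ^ 2 := by
  set u : Fin N → H := fun i => P i (∑ j ∈ Finset.Ioi i, v j) with hu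
  have hum : ∀ i, u i ∈ K i := fun i => hPmem _ _
  have key : ∀ i, ‖u i‖ ^ 2 = ∑ j ∈ Finset.Ioi i, ⟪u i, v j⟫ := by
    intro i
    have h1 : ‖u i‖ ^ 2 = ⟪u i, u i⟫ := (real_inner_self_eq_norm_sq _).symm
    have h2 : ⟪u i, u i⟫ = ⟪u i, ∑ j ∈ Finset.Ioi i, v j⟫ := by
      calc ⟪u i, u i⟫ = ⟪P i (∑ j ∈ Finset.Ioi i, v j), u i⟫ := rfl
        _ = ⟪∑ j ∈ Finset.Ioi i, v j, P i (u i)⟫ := hPsym i _ _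
        _ = ⟪∑ j ∈ Finset.Ioi i, v j, u i⟫ := by rw [hPid i (u i) (hum i)]
        _ = ⟪u i, ∑ j ∈ Finset.Ioi i, v j⟫ := real_inner_comm _ _
    rw [h1, h2, inner_sum]
  have hsum : ∑ i, ‖u i‖ ^ 2 = ∑ i, ∑ j ∈ Finset.Ioi i, ⟪u i, v j⟫ :=
    Finset.sum_congr rfl fun i _ => key i
  have hA : (0:ℝ) ≤ ∑ i, ‖u i‖ ^ 2 := Finset.sum_nonneg fun i _ => sq_nonneg _
  have hB : (0:ℝ) ≤ ∑ i, ‖v i‖ ^ 2 := Finset.sum_nonneg fun i _ => sq_nonneg _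
  have hineq := hSCS u v hum hv
  rw [← hsum] at hineq
  set A := ∑ i, ‖u i‖ ^ 2
  set B := ∑ i, ‖v i‖ ^ 2
  have hsa : Real.sqrt A ^ 2 = A := Real.sq_sqrt hA
  have hsb : Real.sqrt B ^ 2 = B := Real.sq_sqrt hB
  have hsc : Real.sqrt CS ^ 2 = CS := Real.sq_sqrt hCS.le
  nlinarith [Real.sqrt_nonneg A, Real.sqrt_nonneg B, Real.sqrt_nonneg CS,
    sq_nonneg (Real.sqrt CS * Real.sqrt B - Real.sqrt A),
    mul_nonneg (Real.sqrt_nonneg A) (mul_nonneg (Real.sqrt_nonneg CS) (Real.sqrt_nonneg B))]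
end

section
/- Let H be a real Hilbert space and K_1, ..., K_N closed subspaces with H = K_1 + ... + K_N and P_i the orthogonal projection onto K_i. Assume (SD): there is C_A > 0 such that every v ∈ H can be written v = Σ_{i=1}^N v_i with v_i ∈ K_i and Σ_{i=1}^N ||v_i||² ≤ C_A ||v||²; and (SCS): there is C_S > 0 such that for all u_i ∈ K_i and v_j ∈ K_j, Σ_{i=1}^N Σ_{j=i+1}^N (u_i, v_j) ≤ C_S^{1/2} (Σ_{i=1}^N ||u_i||²)^{1/2} (Σ_{j=1}^N ||v_j||²)^{1/2}. Then || (I - P_N)(I - P_{N-1}) ··· (I - P_1) ||² ≤ 1 - 1/(1 + C_A C_S). -/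
/-!
Run the method from the error `v`: `e₀ = v`, `eₖ₊₁ = (I - Pₖ) eₖ`, and let `uₖ = Pₖ eₖ ∈ Kₖ`.
Pythagoras gives `∑ ‖uₖ‖² = ‖v‖² - ‖e_N‖²`. Since `eᵢ₊₁ ⊥ Kᵢ` and `eᵢ₊₁ = e_N + ∑_{j>i} uⱼ`, an
(SD) decomposition `e_N = ∑ wᵢ` gives `‖e_N‖² = ∑ᵢ ⟪wᵢ, e_N⟫ = -∑ᵢ ∑_{j>i} ⟪wᵢ, uⱼ⟫`, which
(SCS) bounds by `√(C_A C_S) ‖e_N‖ (‖v‖² - ‖e_N‖²)^{1/2}`. Hence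
`‖e_N‖² ≤ C_A C_S (‖v‖² - ‖e_N‖²)`.
-/

open RealInnerProductSpace Finset

section Projection

variable {H : Type*} [NormedAddCommGroup H] [InnerProductSpace ℝ H]
  {K : Submodule ℝ H} {P : H →L[ℝ] H}

lemma inner_sub_apply_eq_zero_of_mem (hPid : ∀ x ∈ K, P x = x)
    (hPsym : ∀ x y, ⟪P x, y⟫ = ⟪x, P y⟫) {x : H} (hx : x ∈ K) (y : H) :
    ⟪x, y - P y⟫ = 0 := by
  rw [inner_sub_right, ← hPsym, hPid x hx, sub_self]

lemma norm_sub_apply_sq (hPmem : ∀ x, P x ∈ K) (hPid : ∀ x ∈ K, P x = x)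
    (hPsym : ∀ x y, ⟪P x, y⟫ = ⟪x, P y⟫) (y : H) :
    ‖y - P y‖ ^ 2 = ‖y‖ ^ 2 - ‖P y‖ ^ 2 := by
  have h := inner_sub_apply_eq_zero_of_mem hPid hPsym (hPmem y) y
  rw [inner_sub_right, real_inner_comm, real_inner_self_eq_norm_sq, sub_eq_zero] at h
  rw [norm_sub_sq_real, h]
  ring

end Projection

section Iterate

variable {E : Type*} [TopologicalSpace E] [AddCommGroup E] [Module ℝ E]

/-- The error after `k` steps of successive subspace correction started from the error `v`:
`(I - Q (k-1)) ⋯ (I - Q 0) v`. -/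
def sscIterate (Q : ℕ → E →L[ℝ] E) (v : E) : ℕ → E
  | 0 => v
  | k + 1 => sscIterate Q v k - Q k (sscIterate Q v k)

lemma sscIterate_eq_add_sum_Ico (Q : ℕ → E →L[ℝ] E) (v : E) {m n : ℕ} (hmn : m ≤ n) :
    sscIterate Q v m = sscIterate Q v n + ∑ k ∈ Ico m n, Q k (sscIterate Q v k) := by
  induction n, hmn using Nat.le_induction with
  | base => simp
  | succ n hmn ih =>
    rw [sum_Ico_succ_top hmn, ih, sscIterate]
    abel

lemma prod_reverse_ofFn_one_sub_apply [IsTopologicalAddGroup E] {n : ℕ}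
    {f : Fin n → E →L[ℝ] E} {Q : ℕ → E →L[ℝ] E} (hQ : ∀ i : Fin n, Q i = f i) (v : E) :
    (List.ofFn fun i => (1 : E →L[ℝ] E) - f i).reverse.prod v = sscIterate Q v n := by
  induction n with
  | zero => rfl
  | succ n ih =>
    rw [List.ofFn_succ', List.concat_eq_append, List.reverse_concat, List.prod_cons,
      mul_apply_eq_comp, ih fun i => hQ i.castSucc, ← hQ (Fin.last n)]
    rfl

end Iterate

lemma sum_range_norm_sq_apply_sscIterate {E : Type*} [SeminormedAddCommGroup E]
    [NormedSpace ℝ E] (Q : ℕ → E →L[ℝ] E) (v : E) {n : ℕ}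
    (hQ : ∀ k < n, ∀ y, ‖y - Q k y‖ ^ 2 = ‖y‖ ^ 2 - ‖Q k y‖ ^ 2) :
    ∑ k ∈ range n, ‖Q k (sscIterate Q v k)‖ ^ 2 = ‖v‖ ^ 2 - ‖sscIterate Q v n‖ ^ 2 := by
  induction n with
  | zero => simp [sscIterate]
  | succ n ih =>
    rw [sum_range_succ, ih fun k hk => hQ k (by omega), sscIterate, hQ n n.lt_succ_self]
    ring

section Subspaces

variable {H : Type*} [NormedAddCommGroup H] [InnerProductSpace ℝ H] {N : ℕ}
  {K : Fin N → Submodule ℝ H} {P : Fin N → H →L[ℝ] H} {Q : ℕ → H →L[ℝ] H}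

lemma sum_norm_sq_apply_sscIterate (hQ : ∀ i : Fin N, Q i = P i) (hPmem : ∀ i x, P i x ∈ K i)
    (hPid : ∀ i, ∀ x ∈ K i, P i x = x) (hPsym : ∀ i x y, ⟪P i x, y⟫ = ⟪x, P i y⟫) (v : H) :
    ∑ i, ‖P i (sscIterate Q v i)‖ ^ 2 = ‖v‖ ^ 2 - ‖sscIterate Q v N‖ ^ 2 := by
  rw [← sum_range_norm_sq_apply_sscIterate Q v fun k hk => ?_, ← Fin.sum_univ_eq_sum_range]
  · simp only [hQ]
  · rw [show Q k = P ⟨k, hk⟩ from hQ ⟨k, hk⟩]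
    exact norm_sub_apply_sq (hPmem _) (hPid _) (hPsym _)

lemma inner_sscIterate_eq_neg_sum_Ioi (hQ : ∀ i : Fin N, Q i = P i)
    (hPid : ∀ i, ∀ x ∈ K i, P i x = x) (hPsym : ∀ i x y, ⟪P i x, y⟫ = ⟪x, P i y⟫) (v : H)
    {i : Fin N} {x : H} (hx : x ∈ K i) :
    ⟪x, sscIterate Q v N⟫ = -∑ j ∈ Ioi i, ⟪x, P j (sscIterate Q v j)⟫ := by
  have horth : ⟪x, sscIterate Q v (i + 1)⟫ = 0 := by
    rw [sscIterate, hQ]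
    exact inner_sub_apply_eq_zero_of_mem (hPid i) (hPsym i) hx _
  rw [sscIterate_eq_add_sum_Ico Q v (show (i : ℕ) + 1 ≤ N from i.isLt), inner_add_right,
    inner_sum, Ico_add_one_left_eq_Ioo, ← Fin.map_valEmbedding_Ioi, sum_map] at horth
  simp only [Fin.valEmbedding_apply, hQ] at horth
  linarith

lemma norm_sq_sscIterate_eq_sum_sum (hQ : ∀ i : Fin N, Q i = P i)
    (hPid : ∀ i, ∀ x ∈ K i, P i x = x) (hPsym : ∀ i x y, ⟪P i x, y⟫ = ⟪x, P i y⟫) (v : H)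
    {w : Fin N → H} (hw : ∀ i, w i ∈ K i) (hsum : ∑ i, w i = sscIterate Q v N) :
    ‖sscIterate Q v N‖ ^ 2 = ∑ i, ∑ j ∈ Ioi i, ⟪-w i, P j (sscIterate Q v j)⟫ := by
  conv_lhs => rw [← real_inner_self_eq_norm_sq, ← hsum, sum_inner, hsum]
  refine sum_congr rfl fun i _ => ?_
  simp only [inner_neg_left, sum_neg_distrib]
  exact inner_sscIterate_eq_neg_sum_Ioi hQ hPid hPsym v (hw i)

end Subspaces

lemma sq_le_div_one_add_mul_sq {a b x y : ℝ} (ha : 0 ≤ a) (hb : 0 ≤ b)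
    (h : x ^ 2 ≤ √b * √(a * x ^ 2) * √(y ^ 2 - x ^ 2)) :
    x ^ 2 ≤ a * b / (1 + a * b) * y ^ 2 := by
  set s := √(y ^ 2 - x ^ 2)
  have hxs : x ^ 2 ≤ a * b * s ^ 2 := by
    rw [Real.sqrt_mul ha, Real.sqrt_sq_eq_abs, ← sq_abs x] at h
    have hab : (√a * √b) ^ 2 = a * b := by rw [mul_pow, Real.sq_sqrt ha, Real.sq_sqrt hb]
    nlinarith [sq_nonneg (√a * √b * s - |x|), sq_abs x]
  have hxy : x ^ 2 ≤ a * b * (y ^ 2 - x ^ 2) := by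
    rcases le_or_gt (x ^ 2) (y ^ 2) with hle | hlt
    · rwa [Real.sq_sqrt (sub_nonneg.2 hle)] at hxs
    · have hs : s = 0 := Real.sqrt_eq_zero'.2 (by linarith)
      rw [hs] at hxs
      nlinarith [sq_nonneg x, sq_nonneg y]
  rw [div_mul_eq_mul_div, le_div_iff₀ (by positivity)]
  nlinarith

lemma ContinuousLinearMap.opNorm_sq_le_bound {E F : Type*} [SeminormedAddCommGroup E]
    [SeminormedAddCommGroup F] [NormedSpace ℝ E] [NormedSpace ℝ F] (f : E →L[ℝ] F) {c : ℝ}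
    (hc : 0 ≤ c) (h : ∀ x, ‖f x‖ ^ 2 ≤ c * ‖x‖ ^ 2) : ‖f‖ ^ 2 ≤ c := by
  have hf : ‖f‖ ≤ √c := f.opNorm_le_bound (Real.sqrt_nonneg c) fun x => by
    rw [← pow_le_pow_iff_left₀ (norm_nonneg _) (by positivity) two_ne_zero, mul_pow,
      Real.sq_sqrt hc]
    exact h x
  calc ‖f‖ ^ 2 ≤ √c ^ 2 := by gcongr
    _ = c := Real.sq_sqrt hc

theorem ssc_convergence_rate_general
    {H : Type*} [NormedAddCommGroup H] [InnerProductSpace ℝ H]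
    (N : ℕ) (K : Fin N → Submodule ℝ H)
    (P : Fin N → H →L[ℝ] H)
    (hPmem : ∀ i x, P i x ∈ K i)
    (hPid : ∀ i, ∀ x ∈ K i, P i x = x)
    (hPsym : ∀ i x y, ⟪P i x, y⟫ = ⟪x, P i y⟫)
    (CA : ℝ) (hCA : 0 < CA)
    (hSD : ∀ v : H, ∃ w : Fin N → H, (∀ i, w i ∈ K i) ∧ ∑ i, w i = v ∧
      ∑ i, ‖w i‖ ^ 2 ≤ CA * ‖v‖ ^ 2)
    (CS : ℝ) (hCS : 0 < CS)
    (hSCS : ∀ u v : Fin N → H, (∀ i, u i ∈ K i) → (∀ j, v j ∈ K j) →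
      ∑ i, ∑ j ∈ Finset.Ioi i, ⟪u i, v j⟫ ≤
        Real.sqrt CS * Real.sqrt (∑ i, ‖u i‖ ^ 2) * Real.sqrt (∑ j, ‖v j‖ ^ 2)) :
    ‖(List.ofFn (fun i : Fin N => (1 : H →L[ℝ] H) - P i)).reverse.prod‖ ^ 2
      ≤ 1 - 1 / (1 + CA * CS) := by
  set Q : ℕ → H →L[ℝ] H := Function.extend Fin.val P 0
  have hQ : ∀ i : Fin N, Q i = P i := Fin.val_injective.extend_apply P 0
  have hrate : 1 - 1 / (1 + CA * CS) = CA * CS / (1 + CA * CS) := by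
    rw [one_sub_div (by positivity), add_sub_cancel_left]
  rw [hrate]
  refine ContinuousLinearMap.opNorm_sq_le_bound _ (by positivity) fun v => ?_
  rw [prod_reverse_ofFn_one_sub_apply hQ]
  obtain ⟨w, hwK, hwsum, hwSD⟩ := hSD (sscIterate Q v N)
  refine sq_le_div_one_add_mul_sq hCA.le hCS.le ?_
  calc ‖sscIterate Q v N‖ ^ 2
      = ∑ i, ∑ j ∈ Ioi i, ⟪-w i, P j (sscIterate Q v j)⟫ :=
        norm_sq_sscIterate_eq_sum_sum hQ hPid hPsym v hwK hwsum
    _ ≤ √CS * √(∑ i, ‖-w i‖ ^ 2) * √(∑ j, ‖P j (sscIterate Q v j)‖ ^ 2) :=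
        hSCS _ _ (fun i => (K i).neg_mem (hwK i)) fun j => hPmem j _
    _ ≤ √CS * √(CA * ‖sscIterate Q v N‖ ^ 2) * √(‖v‖ ^ 2 - ‖sscIterate Q v N‖ ^ 2) := by
        simp only [norm_neg]
        rw [sum_norm_sq_apply_sscIterate hQ hPmem hPid hPsym]
        gcongr

/-- Under (SD) and (SCS) for `H = K_1 + ⋯ + K_N`, the error propagation operator
of the successive subspace correction method satisfies
`‖(I - P_N) ⋯ (I - P_1)‖² ≤ 1 - 1/(1 + C_A C_S)`. -/
theorem ssc_convergence_rate
    {H : Type*} [NormedAddCommGroup H] [InnerProductSpace ℝ H] [CompleteSpace H]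
    (N : ℕ) (K : Fin N → Submodule ℝ H) (hK : ∀ i, IsClosed ((K i : Set H)))
    (P : Fin N → H →L[ℝ] H)
    (hPmem : ∀ i x, P i x ∈ K i)
    (hPid : ∀ i, ∀ x ∈ K i, P i x = x)
    (hPsym : ∀ i x y, ⟪P i x, y⟫ = ⟪x, P i y⟫)
    (CA : ℝ) (hCA : 0 < CA)
    (hSD : ∀ v : H, ∃ w : Fin N → H, (∀ i, w i ∈ K i) ∧ ∑ i, w i = v ∧
      ∑ i, ‖w i‖ ^ 2 ≤ CA * ‖v‖ ^ 2)
    (CS : ℝ) (hCS : 0 < CS)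
    (hSCS : ∀ u v : Fin N → H, (∀ i, u i ∈ K i) → (∀ j, v j ∈ K j) →
      ∑ i, ∑ j ∈ Finset.Ioi i, ⟪u i, v j⟫ ≤
        Real.sqrt CS * Real.sqrt (∑ i, ‖u i‖ ^ 2) * Real.sqrt (∑ j, ‖v j‖ ^ 2)) :
    ‖(List.ofFn (fun i : Fin N => (1 : H →L[ℝ] H) - P i)).reverse.prod‖ ^ 2
      ≤ 1 - 1 / (1 + CA * CS) :=
  ssc_convergence_rate_general N K P hPmem hPid hPsym CA hCA hSD CS hCS hSCS
end

section
/- Let v_0 ∈ K and, for i = 1, ..., N, let e_i ∈ K_i satisfy (A e_i, φ) = (f - A v_{i-1}, φ) for all φ ∈ K_i, and set v_i = v_{i-1} + e_i (one sweep of SSO, with u^k = v_0 and u^{k+1} = v_N). Then the energy decrease in one sweep satisfies the exact identity E(u^k) - E(u^{k+1}) = (1/2) Σ_{i=1}^N ||e_i||_A². -/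
open RealInnerProductSpace

/-- One sweep of the SSO method with exact local solvers decreases the energy by
exactly `½ ∑ ‖e_i‖_A²`. -/
theorem sso_energy_decrease_identity
    {V : Type*} [NormedAddCommGroup V] [InnerProductSpace ℝ V] [CompleteSpace V]
    (A : V →L[ℝ] V) (hAsym : ∀ u v : V, ⟪A u, v⟫ = ⟪u, A v⟫)
    (α : ℝ) (hα : 0 < α) (hAcoer : ∀ v : V, α * ‖v‖ ^ 2 ≤ ⟪A v, v⟫)
    (f : V)
    (E : V → ℝ) (hE : ∀ w : V, E w = 1 / 2 * ⟪A w, w⟫ - ⟪f, w⟫)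
    (K : Submodule ℝ V) (hK : IsClosed ((K : Set V)))
    (N : ℕ) (Ki : Fin N → Submodule ℝ V) (hKi : ∀ i, IsClosed ((Ki i : Set V)))
    (hKiK : ∀ i, Ki i ≤ K)
    (hdec : ∀ x ∈ K, ∃ w : Fin N → V, (∀ i, w i ∈ Ki i) ∧ ∑ i, w i = x)
    (uk : V) (hukK : uk ∈ K)
    (v : ℕ → V) (e : Fin N → V)
    (hv0 : v 0 = uk)
    (heK : ∀ i : Fin N, e i ∈ Ki i)
    (heEq : ∀ i : Fin N, ∀ φ ∈ Ki i, ⟪A (e i), φ⟫ = ⟪f - A (v i), φ⟫)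
    (hvs : ∀ i : Fin N, v ((i : ℕ) + 1) = v i + e i) :
    E uk - E (v N) = 1 / 2 * ∑ i, ⟪A (e i), e i⟫ := by
  have hstep : ∀ i : Fin N, E (v i) - E (v ((i : ℕ) + 1)) = 1 / 2 * ⟪A (e i), e i⟫ := by
    intro i
    have hvar := heEq i (e i) (heK i)
    rw [inner_sub_left] at hvar
    have hsymAv : ⟪A (v i), e i⟫ = ⟪A (e i), v i⟫ := by
      rw [hAsym, real_inner_comm]
    have hsymAe : ⟪A (e i), v i⟫ = ⟪v i, A (e i)⟫ := real_inner_comm _ _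
    rw [hvs i, hE, hE]
    simp only [map_add, inner_add_left, inner_add_right]
    nlinarith [hvar, hsymAv, hsymAe]
  have htel : E (v 0) - E (v N) = ∑ i : Fin N, (E (v i) - E (v ((i : ℕ) + 1))) := by
    rw [Fin.sum_univ_eq_sum_range (fun i => E (v i) - E (v (i + 1)))]
    rw [Finset.sum_range_sub' (fun i => E (v i))]
  rw [← hv0, htel, Finset.mul_sum]
  exact Finset.sum_congr rfl fun i _ => hstep i
end

section
/- Let u ∈ K be the minimizer of E over K, i.e., (Au - f, φ) = 0 for all φ ∈ K. Let v_0 = u^k ∈ K and, for i = 1, ..., N, let e_i ∈ K_i satisfy (A e_i, φ) = (f - A v_{i-1}, φ) for all φ ∈ K_i, with v_i = v_{i-1} + e_i and u^{k+1} = v_N. Then for any decomposition u^{k+1} - u = Σ_{i=1}^N w_i with w_i ∈ K_i, one has (E'(u^{k+1}) - E'(u), u^{k+1} - u) = Σ_{i=1}^N Σ_{j=i+1}^N (e_j, w_i)_A. -/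
open RealInnerProductSpace

/-- For one sweep of SSO and any decomposition `u^{k+1} - u = ∑ w_i` with `w_i ∈ K_i`,
`(E'(u^{k+1}) - E'(u), u^{k+1} - u) = ∑_i ∑_{j>i} (e_j, w_i)_A`. -/
theorem sso_double_sum_identity
    {V : Type*} [NormedAddCommGroup V] [InnerProductSpace ℝ V] [CompleteSpace V]
    (A : V →L[ℝ] V) (hAsym : ∀ u v : V, ⟪A u, v⟫ = ⟪u, A v⟫)
    (α : ℝ) (hα : 0 < α) (hAcoer : ∀ v : V, α * ‖v‖ ^ 2 ≤ ⟪A v, v⟫)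
    (f : V)
    (K : Submodule ℝ V) (hK : IsClosed ((K : Set V)))
    (N : ℕ) (Ki : Fin N → Submodule ℝ V) (hKi : ∀ i, IsClosed ((Ki i : Set V)))
    (hKiK : ∀ i, Ki i ≤ K)
    (hdec : ∀ x ∈ K, ∃ w : Fin N → V, (∀ i, w i ∈ Ki i) ∧ ∑ i, w i = x)
    (u : V) (huK : u ∈ K) (hEuler : ∀ φ ∈ K, ⟪A u - f, φ⟫ = 0)
    (uk : V) (hukK : uk ∈ K)
    (v : ℕ → V) (e : Fin N → V)
    (hv0 : v 0 = uk)
    (heK : ∀ i : Fin N, e i ∈ Ki i)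
    (heEq : ∀ i : Fin N, ∀ φ ∈ Ki i, ⟪A (e i), φ⟫ = ⟪f - A (v i), φ⟫)
    (hvs : ∀ i : Fin N, v ((i : ℕ) + 1) = v i + e i)
    (w : Fin N → V) (hwK : ∀ i, w i ∈ Ki i) (hwsum : ∑ i, w i = v N - u) :
    ⟪(A (v N) - f) - (A u - f), v N - u⟫ =
      ∑ i, ∑ j ∈ Finset.Ioi i, ⟪A (e j), w i⟫ := by
  -- telescoping
  have key : ∀ m n, n + m = N →
      v N - v n = ∑ j ∈ Finset.univ.filter (fun j : Fin N => n ≤ (j : ℕ)), e j := by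
    intro m
    induction m with
    | zero =>
      intro n hn
      have hnN : n = N := by omega
      have hempty : (Finset.univ.filter (fun j : Fin N => n ≤ (j : ℕ))) = ∅ := by
        ext j
        have := j.isLt
        simp only [Finset.mem_filter, Finset.mem_univ, true_and, Finset.notMem_empty,
          iff_false, not_le]
        omega
      rw [hempty, Finset.sum_empty, hnN, sub_self]
    | succ m ih =>
      intro n hn
      have hnN : n < N := by omega
      have h1 : v (n + 1) = v n + e ⟨n, hnN⟩ := hvs ⟨n, hnN⟩
      have h2 := ih (n + 1) (by omega)
      have hset : (Finset.univ.filter (fun j : Fin N => n ≤ (j : ℕ)))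
          = insert (⟨n, hnN⟩ : Fin N) (Finset.univ.filter (fun j : Fin N => n + 1 ≤ (j : ℕ))) := by
        ext j
        simp only [Finset.mem_filter, Finset.mem_univ, true_and, Finset.mem_insert, Fin.ext_iff]
        omega
      rw [hset, Finset.sum_insert (by simp)]
      have : v N - v n = (v N - v (n + 1)) + e ⟨n, hnN⟩ := by
        rw [h1]; abel
      rw [this, h2]; abel
  have hkey : ∀ i : Fin N, v N - v ((i : ℕ) + 1) = ∑ j ∈ Finset.Ioi i, e j := by
    intro i
    rw [key (N - ((i : ℕ) + 1)) ((i : ℕ) + 1) (by omega)]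
    apply Finset.sum_congr _ (fun _ _ => rfl)
    ext j
    simp only [Finset.mem_filter, Finset.mem_univ, true_and, Finset.mem_Ioi, Fin.lt_def]
    omega
  -- v N - u ∈ K
  have hvNu : v N - u ∈ K := by
    rw [← hwsum]
    exact Submodule.sum_mem K (fun i _ => hKiK i (hwK i))
  have hE2 : ⟪A u - f, v N - u⟫ = 0 := hEuler _ hvNu
  have hstep : ∀ i : Fin N, ⟪A (v ((i : ℕ) + 1)) - f, w i⟫ = 0 := by
    intro i
    have h := heEq i (w i) (hwK i)
    rw [hvs i, map_add]
    rw [inner_sub_left] at h ⊢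
    rw [inner_add_left]
    linarith
  have main : ∀ i : Fin N, ⟪A (v N) - f, w i⟫ = ∑ j ∈ Finset.Ioi i, ⟪A (e j), w i⟫ := by
    intro i
    have : ⟪A (v N) - f, w i⟫ = ⟪A (v N) - A (v ((i : ℕ) + 1)), w i⟫
        + ⟪A (v ((i : ℕ) + 1)) - f, w i⟫ := by
      rw [← inner_add_left]; congr 1; abel
    rw [this, hstep i, add_zero, ← map_sub, hkey i, map_sum, sum_inner]
  calc ⟪(A (v N) - f) - (A u - f), v N - u⟫
      = ⟪A (v N) - f, v N - u⟫ - ⟪A u - f, v N - u⟫ := by rw [inner_sub_left]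
    _ = ⟪A (v N) - f, ∑ i, w i⟫ := by rw [hE2, sub_zero, hwsum]
    _ = ∑ i, ⟪A (v N) - f, w i⟫ := by rw [inner_sum]
    _ = ∑ i, ∑ j ∈ Finset.Ioi i, ⟪A (e j), w i⟫ := Finset.sum_congr rfl (fun i _ => main i)
end

section
/- Assume (SD): every v ∈ K can be written v = Σ_{i=1}^N v_i with v_i ∈ K_i and Σ_{i=1}^N ||v_i||_A² ≤ C_A ||v||_A²; and (SCS): for all u_i ∈ K_i, v_j ∈ K_j, Σ_{i=1}^N Σ_{j=i+1}^N (u_i, v_j)_A ≤ C_S^{1/2} (Σ_{i=1}^N ||u_i||_A²)^{1/2} (Σ_{j=1}^N ||v_j||_A²)^{1/2}. Let u ∈ K be the minimizer of E over K ((Au - f, φ) = 0 for all φ ∈ K), and let one SSO sweep from u^k ∈ K produce corrections e_i ∈ K_i ((A e_i, φ) = (f - A v_{i-1}, φ) for all φ ∈ K_i, v_i = v_{i-1} + e_i, v_0 = u^k, u^{k+1} = v_N). Then E(u^{k+1}) - E(u) ≤ (1/2) C_S C_A Σ_{i=1}^N ||e_i||_A². -/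
open RealInnerProductSpace

/-- Under (SD) and (SCS), one sweep of SSO satisfies the upper bound
`E(u^{k+1}) - E(u) ≤ ½ C_S C_A ∑ ‖e_i‖_A²`. -/
theorem sso_upper_bound
    {V : Type*} [NormedAddCommGroup V] [InnerProductSpace ℝ V] [CompleteSpace V]
    (A : V →L[ℝ] V) (hAsym : ∀ u v : V, ⟪A u, v⟫ = ⟪u, A v⟫)
    (α : ℝ) (hα : 0 < α) (hAcoer : ∀ v : V, α * ‖v‖ ^ 2 ≤ ⟪A v, v⟫)
    (f : V)
    (E : V → ℝ) (hE : ∀ w : V, E w = 1 / 2 * ⟪A w, w⟫ - ⟪f, w⟫)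
    (K : Submodule ℝ V) (hK : IsClosed ((K : Set V)))
    (N : ℕ) (Ki : Fin N → Submodule ℝ V) (hKi : ∀ i, IsClosed ((Ki i : Set V)))
    (hKiK : ∀ i, Ki i ≤ K)
    (CA : ℝ) (hCA : 0 < CA)
    (hSD : ∀ x ∈ K, ∃ w : Fin N → V, (∀ i, w i ∈ Ki i) ∧ ∑ i, w i = x ∧
      ∑ i, ⟪A (w i), w i⟫ ≤ CA * ⟪A x, x⟫)
    (CS : ℝ) (hCS : 0 < CS)
    (hSCS : ∀ u' v' : Fin N → V, (∀ i, u' i ∈ Ki i) → (∀ j, v' j ∈ Ki j) →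
      ∑ i, ∑ j ∈ Finset.Ioi i, ⟪A (u' i), v' j⟫ ≤
        Real.sqrt CS * Real.sqrt (∑ i, ⟪A (u' i), u' i⟫) *
          Real.sqrt (∑ j, ⟪A (v' j), v' j⟫))
    (u : V) (huK : u ∈ K) (hEuler : ∀ φ ∈ K, ⟪A u - f, φ⟫ = 0)
    (uk : V) (hukK : uk ∈ K)
    (v : ℕ → V) (e : Fin N → V)
    (hv0 : v 0 = uk)
    (heK : ∀ i : Fin N, e i ∈ Ki i)
    (heEq : ∀ i : Fin N, ∀ φ ∈ Ki i, ⟪A (e i), φ⟫ = ⟪f - A (v i), φ⟫)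
    (hvs : ∀ i : Fin N, v ((i : ℕ) + 1) = v i + e i) :
    E (v N) - E u ≤ 1 / 2 * CS * CA * ∑ i, ⟪A (e i), e i⟫ := by
  classical
  have hpos : ∀ x : V, 0 ≤ ⟪A x, x⟫ := fun x =>
    le_trans (by positivity) (hAcoer x)
  -- explicit formula for the iterates
  have hvn : ∀ n : ℕ, n ≤ N → v n = uk + ∑ j : Fin N, if (j : ℕ) < n then e j else 0 := by
    intro n
    induction n with
    | zero => intro _; simp [hv0]
    | succ m ih =>
      intro hm1
      have hm : m < N := hm1
      have hstep := hvs ⟨m, hm⟩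
      simp only [Fin.val_mk] at hstep
      rw [hstep, ih (le_of_lt hm)]
      have hsplit : ∀ j : Fin N, (if (j : ℕ) < m + 1 then e j else 0)
          = (if (j : ℕ) < m then e j else 0) + (if j = ⟨m, hm⟩ then e j else 0) := by
        intro j
        rcases lt_trichotomy (j : ℕ) m with h | h | h
        · simp [Nat.lt_succ_of_lt h, h, Fin.ext_iff, Nat.ne_of_lt h]
        · simp [h, Fin.ext_iff, Nat.lt_irrefl]
        · have h1 : ¬ (j : ℕ) < m + 1 := by omega
          have h2 : ¬ (j : ℕ) < m := by omega
          simp [h1, h2, Fin.ext_iff, Nat.ne_of_gt h]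
      rw [Finset.sum_congr rfl fun j _ => hsplit j, Finset.sum_add_distrib,
        Finset.sum_ite_eq' Finset.univ (⟨m, hm⟩ : Fin N) e]
      simp [add_assoc]
  -- membership of iterates in K
  have hvNK : v N ∈ K := by
    rw [hvn N le_rfl]
    exact K.add_mem hukK (Submodule.sum_mem _ fun j _ => by
      split
      · exact hKiK j (heK j)
      · exact K.zero_mem)
  set r : V := u - v N with hr
  have hrK : r ∈ K := K.sub_mem huK hvNK
  -- energy identity
  have hEid : E (v N) - E u = 1 / 2 * ⟪A r, r⟫ := by
    have hEu := hEuler (v N - u) (K.sub_mem hvNK huK)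
    have hsym : ⟪A u, v N⟫ = ⟪A (v N), u⟫ := by
      rw [hAsym u (v N), real_inner_comm]
    simp only [hr, map_sub, inner_sub_left, inner_sub_right] at hEu ⊢
    rw [hE (v N), hE u]
    linarith
  -- space decomposition of r
  obtain ⟨w, hwK, hwsum, hwbound⟩ := hSD r hrK
  -- e_i solves local problem against u - v i
  have hAei : ∀ i : Fin N, ∀ φ ∈ Ki i, ⟪A (e i), φ⟫ = ⟪A u, φ⟫ - ⟪A (v i), φ⟫ := by
    intro i φ hφ
    rw [heEq i φ hφ]
    have h1 := hEuler φ (hKiK i hφ)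
    simp only [inner_sub_left] at h1 ⊢
    linarith
  -- difference of iterates
  have hdiff : ∀ i : Fin N, v N - v (i : ℕ)
      = e i + ∑ j ∈ Finset.Ioi i, e j := by
    intro i
    rw [hvn N le_rfl, hvn (i : ℕ) (le_of_lt i.isLt)]
    have h1 : (∑ j : Fin N, if (j : ℕ) < N then e j else 0)
        = ∑ j : Fin N, e j := by
      apply Finset.sum_congr rfl
      intro j _; simp [j.isLt]
    rw [h1]
    have h2 : (∑ j : Fin N, e j)
        = (∑ j : Fin N, if (j : ℕ) < (i : ℕ) then e j else 0)
          + ∑ j ∈ Finset.filter (fun j => i ≤ j) Finset.univ, e j := by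
      rw [← Finset.sum_filter, ← Finset.sum_union]
      · apply Finset.sum_congr _ fun _ _ => rfl
        ext j
        simp only [Finset.mem_union, Finset.mem_filter, Finset.mem_univ, true_and]
        constructor
        · intro _
          rcases lt_or_ge (j : ℕ) (i : ℕ) with h | h
          · exact Or.inl h
          · exact Or.inr (by exact_mod_cast h)
        · intro _; trivial
      · rw [Finset.disjoint_left]
        intro j hj1 hj2
        simp only [Finset.mem_filter, Finset.mem_univ, true_and] at hj1 hj2
        exact absurd hj1 (not_lt.mpr (by exact_mod_cast hj2))
    have h3 : Finset.filter (fun j => i ≤ j) Finset.univ = insert i (Finset.Ioi i) := by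
      ext j
      simp [Finset.mem_Ioi, le_iff_lt_or_eq, eq_comm, or_comm]
    rw [h2, h3, Finset.sum_insert (by simp)]
    abel
  -- key identity: ⟪A r, w i⟫ = - ∑_{j>i} ⟪A e j, w i⟫
  have hkey : ∀ i : Fin N,
      ⟪A r, w i⟫ = ∑ j ∈ Finset.Ioi i, ⟪A (w i), -(e j)⟫ := by
    intro i
    have h1 : ⟪A r, w i⟫ = ⟪A (e i), w i⟫ - ⟪A (v N) - A (v (i : ℕ)), w i⟫ := by
      rw [hAei i (w i) (hwK i)]
      simp only [hr, map_sub, inner_sub_left]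
      ring
    have h2 : ⟪A (v N) - A (v (i : ℕ)), w i⟫
        = ⟪A (e i), w i⟫ + ∑ j ∈ Finset.Ioi i, ⟪A (e j), w i⟫ := by
      rw [← map_sub, hdiff i, map_add, map_sum, inner_add_left, sum_inner]
    have h3 : ∀ j : Fin N, ⟪A (w i), -(e j)⟫ = -⟪A (e j), w i⟫ := fun j => by
      rw [inner_neg_right, hAsym, real_inner_comm]
    calc ⟪A r, w i⟫ = -∑ j ∈ Finset.Ioi i, ⟪A (e j), w i⟫ := by rw [h1, h2]; ring
      _ = ∑ j ∈ Finset.Ioi i, -⟪A (e j), w i⟫ := by rw [Finset.sum_neg_distrib]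
      _ = ∑ j ∈ Finset.Ioi i, ⟪A (w i), -(e j)⟫ :=
          Finset.sum_congr rfl fun j _ => (h3 j).symm
  -- expand ⟪A r, r⟫ via the decomposition
  have hXeq : ⟪A r, r⟫ = ∑ i, ∑ j ∈ Finset.Ioi i, ⟪A (w i), -(e j)⟫ := by
    have h0 : ⟪A r, r⟫ = ∑ i, ⟪A r, w i⟫ := by
      rw [← inner_sum, hwsum]
    rw [h0]
    exact Finset.sum_congr rfl fun i _ => hkey i
  -- apply strengthened Cauchy–Schwarz
  have hneg : ∀ j : Fin N, ⟪A (-(e j)), -(e j)⟫ = ⟪A (e j), e j⟫ := fun j => by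
    rw [map_neg, inner_neg_neg]
  have hscs := hSCS w (fun j => -(e j)) hwK (fun j => (Ki j).neg_mem (heK j))
  simp only [hneg] at hscs
  set X : ℝ := ⟪A r, r⟫ with hXdef
  set S : ℝ := ∑ i, ⟪A (e i), e i⟫ with hSdef
  set W : ℝ := ∑ i, ⟪A (w i), w i⟫ with hWdef
  have hXnn : 0 ≤ X := hpos r
  have hSnn : 0 ≤ S := Finset.sum_nonneg fun i _ => hpos (e i)
  have hWnn : 0 ≤ W := Finset.sum_nonneg fun i _ => hpos (w i)
  have hXle : X ≤ Real.sqrt CS * Real.sqrt W * Real.sqrt S := by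
    rw [hXeq]; exact hscs
  -- X² ≤ CS * W * S
  have hsq : X ^ 2 ≤ CS * W * S := by
    have hR : (Real.sqrt CS * Real.sqrt W * Real.sqrt S) ^ 2 = CS * W * S := by
      rw [mul_pow, mul_pow, Real.sq_sqrt hCS.le, Real.sq_sqrt hWnn, Real.sq_sqrt hSnn]
    calc X ^ 2 ≤ (Real.sqrt CS * Real.sqrt W * Real.sqrt S) ^ 2 :=
          pow_le_pow_left₀ hXnn hXle 2
      _ = CS * W * S := hR
  have hsq2 : X ^ 2 ≤ CS * (CA * X) * S := by
    have h1 : CS * W * S ≤ CS * (CA * X) * S := by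
      nlinarith [mul_nonneg hCS.le hSnn, hwbound]
    linarith
  have hfinal : X ≤ CS * CA * S := by
    rcases eq_or_lt_of_le hXnn with h0 | h0
    · nlinarith [mul_nonneg (mul_nonneg hCS.le hCA.le) hSnn]
    · nlinarith [hsq2, h0]
  rw [hEid]
  linarith
end

section
/- Assume the decomposition K = Σ_{i=1}^N K_i satisfies (SD) with constant C_A > 0 and (SCS) with constant C_S > 0. Let u ∈ K be the minimizer of E over K ((Au - f, φ) = 0 for all φ ∈ K), and let u^{k+1} be the result of one SSO sweep from u^k ∈ K (v_0 = u^k; e_i ∈ K_i with (A e_i, φ) = (f - A v_{i-1}, φ) for all φ ∈ K_i; v_i = v_{i-1} + e_i; u^{k+1} = v_N). Then E(u^{k+1}) - E(u) ≤ (1 - 1/(1 + C_A C_S)) [E(u^k) - E(u)]. -/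
/-!
Each local solve lowers the energy by `½‖e_i‖_A²`, so `E(u^k) - E(u^{k+1}) = ½ Σ ‖e_i‖_A²`,
while the Euler equation gives `E(u^{k+1}) - E(u) = ½ ‖u^{k+1} - u‖_A²`. After the `i`-th local
solve the error is `A`-orthogonal to `K_i`, so pairing the final error with its stable
decomposition `Σ w_i` leaves only the upper-triangular terms `Σ_{i<j} (w_i, e_j)_A`.
(SCS) and (SD) bound these by `√(C_S C_A) ‖u^{k+1} - u‖_A (Σ ‖e_i‖_A²)^{1/2}`, hence
`‖u^{k+1} - u‖_A² ≤ C_A C_S Σ ‖e_i‖_A²`, which rearranges to the contraction.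
-/

open RealInnerProductSpace Finset

section Telescoping

variable {M : Type*} [AddCommGroup M] {N : ℕ} {x : ℕ → M} {d : Fin N → M}

theorem Fin.sum_Ioi_eq_sub_of_forall_add (h : ∀ i : Fin N, x (i + 1) = x i + d i) (i : Fin N) :
    ∑ j ∈ Ioi i, d j = x N - x (i + 1) := by
  calc ∑ j ∈ Ioi i, d j = ∑ j ∈ Ioi i, (x (j + 1) - x j) :=
        sum_congr rfl fun j _ => by rw [h j, add_sub_cancel_left]
    _ = ∑ n ∈ Ico ((i : ℕ) + 1) N, (x (n + 1) - x n) := by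
        rw [Ico_add_one_left_eq_Ioo, ← Fin.map_valEmbedding_Ioi, sum_map]; rfl
    _ = x N - x (i + 1) := sum_Ico_sub _ i.isLt

theorem Fin.sum_univ_eq_sub_of_forall_add (h : ∀ i : Fin N, x (i + 1) = x i + d i) :
    ∑ j, d j = x N - x 0 := by
  calc ∑ j, d j = ∑ j : Fin N, (x (j + 1) - x j) :=
        sum_congr rfl fun j _ => by rw [h j, add_sub_cancel_left]
    _ = x N - x 0 := by rw [Fin.sum_univ_eq_sum_range (fun n => x (n + 1) - x n), sum_range_sub]

end Telescoping

section Energy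

variable {V : Type*} [NormedAddCommGroup V] [InnerProductSpace ℝ V]

noncomputable def quadEnergy (T : V →ₗ[ℝ] V) (f w : V) : ℝ := 1 / 2 * ⟪T w, w⟫ - ⟪f, w⟫

variable {T : V →ₗ[ℝ] V} {f : V}

theorem quadEnergy_add (hT : T.IsSymmetric) (x y : V) :
    quadEnergy T f (x + y) = quadEnergy T f x + ⟪T x - f, y⟫ + 1 / 2 * ⟪T y, y⟫ := by
  have hxy : ⟪T y, x⟫ = ⟪T x, y⟫ := by rw [hT, real_inner_comm]
  simp only [quadEnergy, map_add, inner_add_left, inner_add_right, inner_sub_left]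
  linarith

theorem quadEnergy_add_of_local_solve (hT : T.IsSymmetric) {x e : V}
    (he : ⟪T e, e⟫ = ⟪f - T x, e⟫) :
    quadEnergy T f (x + e) = quadEnergy T f x - 1 / 2 * ⟪T e, e⟫ := by
  rw [quadEnergy_add hT, ← neg_sub, inner_neg_left, ← he]
  ring

theorem quadEnergy_sub_of_euler (hT : T.IsSymmetric) {u w : V} (hu : ⟪T u - f, w - u⟫ = 0) :
    quadEnergy T f w - quadEnergy T f u = 1 / 2 * ⟪T (w - u), w - u⟫ := by
  conv_lhs => rw [← add_sub_cancel u w, quadEnergy_add hT, hu]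
  ring

theorem inner_add_sub_eq_zero_of_local_solve {x e u φ : V}
    (he : ⟪T e, φ⟫ = ⟪f - T x, φ⟫) (hu : ⟪T u - f, φ⟫ = 0) : ⟪T (x + e - u), φ⟫ = 0 := by
  simp only [map_sub, map_add, inner_sub_left, inner_add_left] at he hu ⊢
  linarith

theorem inner_self_eq_sum_sum_Ioi {N : ℕ} (hT : T.IsSymmetric) {r : V} {r' e w : Fin N → V}
    (hr : ∀ i, r = r' i + ∑ j ∈ Ioi i, e j) (horth : ∀ i, ⟪T (r' i), w i⟫ = 0)
    (hw : ∑ i, w i = r) : ⟪T r, r⟫ = ∑ i, ∑ j ∈ Ioi i, ⟪T (w i), e j⟫ := by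
  nth_rw 2 [← hw]
  rw [inner_sum]
  refine sum_congr rfl fun i _ => ?_
  rw [hr i, map_add, inner_add_left, horth, zero_add, map_sum, sum_inner]
  exact sum_congr rfl fun j _ => by rw [hT, real_inner_comm]

end Energy

theorem le_mul_mul_of_le_sqrt_mul_sqrt_mul_sqrt {P W S a c : ℝ} (hP : 0 ≤ P) (hS : 0 ≤ S)
    (ha : 0 ≤ a) (hc : 0 ≤ c) (h : P ≤ √c * √W * √S) (hW : W ≤ a * P) : P ≤ a * c * S := by
  have hle : P ≤ √(c * (a * P) * S) := by
    rw [Real.sqrt_mul (by positivity), Real.sqrt_mul hc]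
    exact h.trans (by gcongr)
  have hsq : P * P ≤ P * (a * c * S) := by
    calc P * P ≤ √(c * (a * P) * S) ^ 2 := by nlinarith
      _ = P * (a * c * S) := by rw [Real.sq_sqrt (by positivity)]; ring
  rcases hP.eq_or_lt with rfl | hP
  · positivity
  · exact le_of_mul_le_mul_left hsq hP

theorem le_one_sub_one_div_mul_of_le {a b κ : ℝ} (hκ : 0 ≤ κ) (h : a ≤ κ * (b - a)) :
    a ≤ (1 - 1 / (1 + κ)) * b := by
  rw [show 1 - 1 / (1 + κ) = κ / (1 + κ) by field_simp; ring, div_mul_eq_mul_div,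
    le_div_iff₀ (by positivity)]
  linarith

theorem sso_energy_contraction_general
    {V : Type*} [NormedAddCommGroup V] [InnerProductSpace ℝ V]
    (A : V →L[ℝ] V) (hAsym : ∀ u v : V, ⟪A u, v⟫ = ⟪u, A v⟫)
    (α : ℝ) (hα : 0 < α) (hAcoer : ∀ v : V, α * ‖v‖ ^ 2 ≤ ⟪A v, v⟫)
    (f : V)
    (E : V → ℝ) (hE : ∀ w : V, E w = 1 / 2 * ⟪A w, w⟫ - ⟪f, w⟫)
    (K : Submodule ℝ V)
    (N : ℕ) (Ki : Fin N → Submodule ℝ V)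
    (hKiK : ∀ i, Ki i ≤ K)
    (CA : ℝ) (hCA : 0 < CA)
    (hSD : ∀ x ∈ K, ∃ w : Fin N → V, (∀ i, w i ∈ Ki i) ∧ ∑ i, w i = x ∧
      ∑ i, ⟪A (w i), w i⟫ ≤ CA * ⟪A x, x⟫)
    (CS : ℝ) (hCS : 0 < CS)
    (hSCS : ∀ u' v' : Fin N → V, (∀ i, u' i ∈ Ki i) → (∀ j, v' j ∈ Ki j) →
      ∑ i, ∑ j ∈ Finset.Ioi i, ⟪A (u' i), v' j⟫ ≤
        Real.sqrt CS * Real.sqrt (∑ i, ⟪A (u' i), u' i⟫) *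
          Real.sqrt (∑ j, ⟪A (v' j), v' j⟫))
    (u : V) (huK : u ∈ K) (hEuler : ∀ φ ∈ K, ⟪A u - f, φ⟫ = 0)
    (uk : V) (hukK : uk ∈ K)
    (v : ℕ → V) (e : Fin N → V)
    (hv0 : v 0 = uk)
    (heK : ∀ i : Fin N, e i ∈ Ki i)
    (heEq : ∀ i : Fin N, ∀ φ ∈ Ki i, ⟪A (e i), φ⟫ = ⟪f - A (v i), φ⟫)
    (hvs : ∀ i : Fin N, v ((i : ℕ) + 1) = v i + e i) :
    E (v N) - E u ≤ (1 - 1 / (1 + CA * CS)) * (E uk - E u) := by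
  have hEq : E = quadEnergy (A : V →ₗ[ℝ] V) f := funext hE
  have hA : (A : V →ₗ[ℝ] V).IsSymmetric := hAsym
  have hpos (x : V) : 0 ≤ ⟪A x, x⟫ := (by positivity : 0 ≤ α * ‖x‖ ^ 2).trans (hAcoer x)
  have hvN : v N ∈ K := by
    rw [← sub_add_cancel (v N) (v 0), ← Fin.sum_univ_eq_sub_of_forall_add hvs, hv0]
    exact K.add_mem (K.sum_mem fun i _ => hKiK i (heK i)) hukK
  have hdrop : E (v N) = E uk - 1 / 2 * ∑ i, ⟪A (e i), e i⟫ := by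
    have hstep (i : Fin N) : E (v (i + 1)) = E (v i) + -(1 / 2 * ⟪A (e i), e i⟫) := by
      rw [hEq, hvs, quadEnergy_add_of_local_solve hA (heEq i _ (heK i)), sub_eq_add_neg]
      rfl
    have htel := Fin.sum_univ_eq_sub_of_forall_add (x := fun n => E (v n)) hstep
    rw [sum_neg_distrib, ← mul_sum, hv0] at htel
    linarith
  have herror : E (v N) - E u = 1 / 2 * ⟪A (v N - u), v N - u⟫ :=
    hEq ▸ quadEnergy_sub_of_euler hA (hEuler _ (K.sub_mem hvN huK))
  obtain ⟨w, hwK, hw_sum, hw_stable⟩ := hSD _ (K.sub_mem hvN huK)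
  have hsplit : ⟪A (v N - u), v N - u⟫ = ∑ i, ∑ j ∈ Ioi i, ⟪A (w i), e j⟫ := by
    refine inner_self_eq_sum_sum_Ioi (r' := fun i => v (i + 1) - u) hA (fun i => ?_)
      (fun i => ?_) hw_sum
    · rw [Fin.sum_Ioi_eq_sub_of_forall_add hvs]; abel
    · rw [hvs]
      exact inner_add_sub_eq_zero_of_local_solve (heEq i _ (hwK i)) (hEuler _ (hKiK i (hwK i)))
  have hkey : ⟪A (v N - u), v N - u⟫ ≤ CA * CS * ∑ i, ⟪A (e i), e i⟫ :=
    le_mul_mul_of_le_sqrt_mul_sqrt_mul_sqrt (hpos _) (sum_nonneg fun i _ => hpos _) hCA.le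
      hCS.le (hsplit ▸ hSCS w e hwK heK) hw_stable
  refine le_one_sub_one_div_mul_of_le (by positivity) ?_
  rw [show E uk - E u - (E (v N) - E u) = 1 / 2 * ∑ i, ⟪A (e i), e i⟫ by rw [hdrop]; ring,
    herror]
  linarith

/-- Under (SD) and (SCS), one sweep of SSO contracts the energy difference:
`E(u^{k+1}) - E(u) ≤ (1 - 1/(1 + C_A C_S)) [E(u^k) - E(u)]`. -/
theorem sso_energy_contraction
    {V : Type*} [NormedAddCommGroup V] [InnerProductSpace ℝ V] [CompleteSpace V]
    (A : V →L[ℝ] V) (hAsym : ∀ u v : V, ⟪A u, v⟫ = ⟪u, A v⟫)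
    (α : ℝ) (hα : 0 < α) (hAcoer : ∀ v : V, α * ‖v‖ ^ 2 ≤ ⟪A v, v⟫)
    (f : V)
    (E : V → ℝ) (hE : ∀ w : V, E w = 1 / 2 * ⟪A w, w⟫ - ⟪f, w⟫)
    (K : Submodule ℝ V) (hK : IsClosed ((K : Set V)))
    (N : ℕ) (Ki : Fin N → Submodule ℝ V) (hKi : ∀ i, IsClosed ((Ki i : Set V)))
    (hKiK : ∀ i, Ki i ≤ K)
    (CA : ℝ) (hCA : 0 < CA)
    (hSD : ∀ x ∈ K, ∃ w : Fin N → V, (∀ i, w i ∈ Ki i) ∧ ∑ i, w i = x ∧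
      ∑ i, ⟪A (w i), w i⟫ ≤ CA * ⟪A x, x⟫)
    (CS : ℝ) (hCS : 0 < CS)
    (hSCS : ∀ u' v' : Fin N → V, (∀ i, u' i ∈ Ki i) → (∀ j, v' j ∈ Ki j) →
      ∑ i, ∑ j ∈ Finset.Ioi i, ⟪A (u' i), v' j⟫ ≤
        Real.sqrt CS * Real.sqrt (∑ i, ⟪A (u' i), u' i⟫) *
          Real.sqrt (∑ j, ⟪A (v' j), v' j⟫))
    (u : V) (huK : u ∈ K) (hEuler : ∀ φ ∈ K, ⟪A u - f, φ⟫ = 0)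
    (uk : V) (hukK : uk ∈ K)
    (v : ℕ → V) (e : Fin N → V)
    (hv0 : v 0 = uk)
    (heK : ∀ i : Fin N, e i ∈ Ki i)
    (heEq : ∀ i : Fin N, ∀ φ ∈ Ki i, ⟪A (e i), φ⟫ = ⟪f - A (v i), φ⟫)
    (hvs : ∀ i : Fin N, v ((i : ℕ) + 1) = v i + e i) :
    E (v N) - E u ≤ (1 - 1 / (1 + CA * CS)) * (E uk - E u) :=
  sso_energy_contraction_general A hAsym α hα hAcoer f E hE K N Ki hKiK CA hCA hSD CS hCS hSCS u huK
    hEuler uk hukK v e hv0 heK heEq hvs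
end

section
/- Let V and P be finite-dimensional real inner product spaces, B : V → P a surjective linear map, D and A symmetric positive definite operators on V, and P_D := I - D^{-1} B^T (B D^{-1} B^T)^{-1} B the D-orthogonal projection onto K := ker(B). Then the operator A_K := D P_D D^{-1} A P_D satisfies (A_K u, w) = (A P_D u, P_D w) for all u, w ∈ V; consequently A_K is symmetric and positive semidefinite with respect to (·,·), and (A_K v, w) = (Av, w) for all v, w ∈ K, i.e., the A_K-inner product coincides with the A-inner product restricted to K. -/
open RealInnerProductSpace

/-- With `P_D = I - D⁻¹ Bᵀ (B D⁻¹ Bᵀ)⁻¹ B` the `D`-orthogonal projection onto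
`K = ker B`, the operator `A_K = D P_D D⁻¹ A P_D` satisfies
`(A_K u, w) = (A P_D u, P_D w)`; hence it is symmetric, positive semidefinite, and
coincides with `A` on `K`. -/
theorem projected_operator_properties
    {V P : Type*}
    [NormedAddCommGroup V] [InnerProductSpace ℝ V] [FiniteDimensional ℝ V]
    [NormedAddCommGroup P] [InnerProductSpace ℝ P] [FiniteDimensional ℝ P]
    (B : V →ₗ[ℝ] P) (hB : Function.Surjective B)
    (BT : P →ₗ[ℝ] V) (hBT : ∀ (v : V) (q : P), ⟪B v, q⟫ = ⟪v, BT q⟫)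
    (D : V →ₗ[ℝ] V) (hDsym : ∀ u w : V, ⟪D u, w⟫ = ⟪u, D w⟫)
    (hDpos : ∀ x : V, x ≠ 0 → 0 < ⟪D x, x⟫)
    (A : V →ₗ[ℝ] V) (hAsym : ∀ u w : V, ⟪A u, w⟫ = ⟪u, A w⟫)
    (hApos : ∀ x : V, x ≠ 0 → 0 < ⟪A x, x⟫)
    (Dinv : V →ₗ[ℝ] V) (hDinv1 : Dinv ∘ₗ D = LinearMap.id) (hDinv2 : D ∘ₗ Dinv = LinearMap.id)
    (Sinv : P →ₗ[ℝ] P)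
    (hSinv1 : Sinv ∘ₗ (B ∘ₗ Dinv ∘ₗ BT) = LinearMap.id)
    (hSinv2 : (B ∘ₗ Dinv ∘ₗ BT) ∘ₗ Sinv = LinearMap.id)
    (PD : V →ₗ[ℝ] V) (hPD : PD = LinearMap.id - Dinv ∘ₗ BT ∘ₗ Sinv ∘ₗ B)
    (AK : V →ₗ[ℝ] V) (hAK : AK = D ∘ₗ PD ∘ₗ Dinv ∘ₗ A ∘ₗ PD) :
    (∀ u w : V, ⟪AK u, w⟫ = ⟪A (PD u), PD w⟫) ∧
    (∀ u w : V, ⟪AK u, w⟫ = ⟪u, AK w⟫) ∧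
    (∀ u : V, 0 ≤ ⟪AK u, u⟫) ∧
    (∀ x ∈ LinearMap.ker B, ∀ y ∈ LinearMap.ker B, ⟪AK x, y⟫ = ⟪A x, y⟫) := by
  have hDDinv : ∀ x : V, D (Dinv x) = x := fun x => LinearMap.congr_fun hDinv2 x
  have hBT' : ∀ (q : P) (v : V), ⟪BT q, v⟫ = ⟪q, B v⟫ := by
    intro q v
    rw [real_inner_comm, ← hBT, real_inner_comm]
  -- Dinv is symmetric
  have hDinvSym : ∀ u w : V, ⟪Dinv u, w⟫ = ⟪u, Dinv w⟫ := by
    intro u w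
    calc ⟪Dinv u, w⟫ = ⟪Dinv u, D (Dinv w)⟫ := by rw [hDDinv]
      _ = ⟪D (Dinv u), Dinv w⟫ := (hDsym _ _).symm
      _ = ⟪u, Dinv w⟫ := by rw [hDDinv]
  -- S = B Dinv BT is symmetric, so Sinv is symmetric
  have hSsym : ∀ p q : P, ⟪B (Dinv (BT p)), q⟫ = ⟪p, B (Dinv (BT q))⟫ := by
    intro p q
    rw [hBT, hDinvSym, ← hBT', real_inner_comm]
  have hSSinv : ∀ q : P, B (Dinv (BT (Sinv q))) = q := fun q => LinearMap.congr_fun hSinv2 q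
  have hSinvSym : ∀ p q : P, ⟪Sinv p, q⟫ = ⟪p, Sinv q⟫ := by
    intro p q
    calc ⟪Sinv p, q⟫ = ⟪Sinv p, B (Dinv (BT (Sinv q)))⟫ := by rw [hSSinv]
      _ = ⟪B (Dinv (BT (Sinv p))), Sinv q⟫ := (hSsym _ _).symm
      _ = ⟪p, Sinv q⟫ := by rw [hSSinv]
  -- key adjoint identity: ⟪D (PD (Dinv x)), w⟫ = ⟪x, PD w⟫
  have hkey : ∀ x w : V, ⟪D (PD (Dinv x)), w⟫ = ⟪x, PD w⟫ := by
    intro x w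
    subst hPD
    simp only [LinearMap.sub_apply, LinearMap.comp_apply, LinearMap.id_apply, map_sub]
    rw [hDDinv, inner_sub_left, inner_sub_right]
    congr 1
    rw [hDDinv, hBT', hSinvSym, hBT, hDinvSym]
  have h1 : ∀ u w : V, ⟪AK u, w⟫ = ⟪A (PD u), PD w⟫ := by
    intro u w
    rw [hAK]
    simp only [LinearMap.comp_apply]
    rw [hkey]
  refine ⟨h1, ?_, ?_, ?_⟩
  · intro u w
    rw [h1, real_inner_comm (AK w) u, h1, hAsym, real_inner_comm]
  · intro u
    rw [h1]
    by_cases h : PD u = 0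
    · simp [h]
    · exact le_of_lt (hApos _ h)
  · intro x hx y hy
    have hPDfix : ∀ z : V, B z = 0 → PD z = z := by
      intro z hz
      rw [hPD]
      simp [hz]
    rw [h1, hPDfix x (LinearMap.mem_ker.mp hx), hPDfix y (LinearMap.mem_ker.mp hy)]
end

section
/- Let V be a finite-dimensional real inner product space, K a subspace, and A, D symmetric positive definite operators on V satisfying the spectral bounds m (Dv, v) ≤ (Av, v) ≤ M (Dv, v) for all v ∈ V, with 0 < m ≤ M and κ := M/m. Given r ∈ V, let e* ∈ K be the exact correction, i.e., (A e*, φ) = (r, φ) for all φ ∈ K, and let s ∈ K be the preconditioned correction, i.e., (D s, φ) = (r, φ) for all φ ∈ K. Define e := α s with α = (r, s)/(As, s) when s ≠ 0 and e := 0 when s = 0. Then ||e* - e||_A ≤ ε ||e*||_A with ε = (κ - 1)/(κ + 1) ∈ [0, 1), and consequently ||e* - e||_A ≤ (ε/(1-ε)) ||e||_A = (1/2)(κ - 1) ||e||_A. -/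
open RealInnerProductSpace

set_option maxHeartbeats 1600000 in
lemma key_scalar (m M a b c d : ℝ) (hm : 0 < m) (hmM : m ≤ M)
    (hb : 0 ≤ b) (hd : 0 ≤ d)
    (h1 : m*d ≤ a) (h2 : a ≤ M*d) (h3 : m*b ≤ c) (h4 : c ≤ M*b)
    (hP : (b - m*a)^2 ≤ (a - m*d)*(c - m*b))
    (hQ : (M*a - b)^2 ≤ (M*d - a)*(M*b - c)) :
    M*m*a + c ≤ (M+m)*b := by
  have ha : 0 ≤ a := le_trans (mul_nonneg hm.le hd) h1
  have hM : 0 < M := lt_of_lt_of_le hm hmM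
  rcases eq_or_lt_of_le hmM with hMm | hMm
  · subst hMm
    have hc : c = m*b := le_antisymm h4 h3
    subst hc
    have hP' : (b - m*a)^2 ≤ 0 := le_trans hP (le_of_eq (by ring))
    nlinarith [hP', mul_pos hm hm]
  · rcases eq_or_lt_of_le h4 with hX | hX
    · subst hX
      have hQ' : (M*a - b)^2 ≤ 0 := le_trans hQ (le_of_eq (by ring))
      nlinarith [hQ', mul_pos hm hm]
    · rcases eq_or_lt_of_le h3 with hY | hY
      · rw [← hY] at hP hX ⊢
        have hP' : (b - m*a)^2 ≤ 0 := le_trans hP (le_of_eq (by ring))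
        nlinarith [hP', mul_pos hM hM]
      · rcases eq_or_lt_of_le ha with ha0 | ha0
        · obtain rfl : a = 0 := ha0.symm
          nlinarith [mul_nonneg hm.le hb]
        · have hXpos : 0 < M*b - c := sub_pos.2 hX
          have hYpos : 0 < c - m*b := sub_pos.2 hY
          have h5 : m*(c - m*b)*((M*a - b)^2) ≤ m*(c - m*b)*((M*d - a)*(M*b - c)) :=
            mul_le_mul_of_nonneg_left hQ (mul_nonneg hm.le hYpos.le)
          have h6 : M*(M*b - c)*((b - m*a)^2) ≤ M*(M*b - c)*((a - m*d)*(c - m*b)) :=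
            mul_le_mul_of_nonneg_left hP (mul_nonneg hM.le hXpos.le)
          have hsum : m*(c - m*b)*((M*a - b)^2) + M*(M*b - c)*((b - m*a)^2)
              ≤ (M-m)*a*((M*b - c)*(c - m*b)) := by nlinarith [h5, h6]
          have hcs : M*m*((M*b - c)*(c - m*b))*((M-m)*a)^2 ≤
              (m*(c - m*b)*((M*a - b)^2) + M*(M*b - c)*((b - m*a)^2))*(M*(M*b - c) + m*(c - m*b)) := by
            nlinarith [sq_nonneg (m*(c - m*b)*(M*a - b) - M*(M*b - c)*(b - m*a))]
          have h7 : (m*(c - m*b)*((M*a - b)^2) + M*(M*b - c)*((b - m*a)^2))*(M*(M*b - c) + m*(c - m*b))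
              ≤ (M-m)*a*((M*b - c)*(c - m*b))*(M*(M*b - c) + m*(c - m*b)) :=
            mul_le_mul_of_nonneg_right hsum (by positivity)
          have h8 : M*m*((M*b - c)*(c - m*b))*((M-m)*a)^2 ≤
              (M-m)*a*((M*b - c)*(c - m*b))*(M*(M*b - c) + m*(c - m*b)) := le_trans hcs h7
          have hid : (M-m)*a*((M*b - c)*(c - m*b))*(M*(M*b - c) + m*(c - m*b))
              - M*m*((M*b - c)*(c - m*b))*((M-m)*a)^2
              = ((M-m)^2*a*((M*b - c)*(c - m*b)))*((M+m)*b - c - M*m*a) := by ring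
          have h9 : 0 ≤ ((M-m)^2*a*((M*b - c)*(c - m*b)))*((M+m)*b - c - M*m*a) := by
            rw [← hid]; linarith [h8]
          have h10 : 0 < (M-m)^2*a*((M*b - c)*(c - m*b)) :=
            mul_pos (mul_pos (pow_pos (sub_pos.2 hMm) 2) ha0) (mul_pos hXpos hYpos)
          have := (mul_nonneg_iff_of_pos_left h10).1 h9
          linarith

lemma psd_cs {V : Type*} [NormedAddCommGroup V] [InnerProductSpace ℝ V]
    (L : V →ₗ[ℝ] V) (hsym : ∀ u w : V, ⟪L u, w⟫ = ⟪u, L w⟫)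
    (hpos : ∀ x : V, 0 ≤ ⟪L x, x⟫) (x y : V) :
    ⟪L x, y⟫^2 ≤ ⟪L x, x⟫ * ⟪L y, y⟫ := by
  have hq : ∀ t : ℝ, 0 ≤ ⟪L y, y⟫ * (t * t) + (2 * ⟪L x, y⟫) * t + ⟪L x, x⟫ := by
    intro t
    have h := hpos (x + t • y)
    have hyx : ⟪L y, x⟫ = ⟪L x, y⟫ := by
      rw [hsym y x, real_inner_comm]
    simp only [map_add, map_smul, inner_add_left, inner_add_right, inner_smul_left,
      inner_smul_right, real_inner_smul_left, real_inner_smul_right, starRingEnd_apply,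
      star_trivial] at h
    rw [hyx] at h
    ring_nf at h ⊢
    linarith [h]
  have hd := discrim_le_zero hq
  rw [discrim] at hd
  nlinarith [hd]

set_option maxHeartbeats 2000000 in
/-- Accuracy of the inexact local solver: under spectral bounds
`m (Dv,v) ≤ (Av,v) ≤ M (Dv,v)` with `κ = M/m`, the preconditioned correction with
exact line search satisfies `‖e* - e‖_A ≤ ε ‖e*‖_A` with `ε = (κ-1)/(κ+1) ∈ [0,1)`,
and consequently `‖e* - e‖_A ≤ ½(κ-1)‖e‖_A`. -/
theorem inexact_local_solver_accuracy
    {V : Type*} [NormedAddCommGroup V] [InnerProductSpace ℝ V] [FiniteDimensional ℝ V]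
    (K : Submodule ℝ V)
    (A : V →ₗ[ℝ] V) (hAsym : ∀ u w : V, ⟪A u, w⟫ = ⟪u, A w⟫)
    (hApos : ∀ x : V, x ≠ 0 → 0 < ⟪A x, x⟫)
    (D : V →ₗ[ℝ] V) (hDsym : ∀ u w : V, ⟪D u, w⟫ = ⟪u, D w⟫)
    (hDpos : ∀ x : V, x ≠ 0 → 0 < ⟪D x, x⟫)
    (m M : ℝ) (hm : 0 < m) (hmM : m ≤ M)
    (hspec : ∀ x : V, m * ⟪D x, x⟫ ≤ ⟪A x, x⟫ ∧ ⟪A x, x⟫ ≤ M * ⟪D x, x⟫)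
    (κ : ℝ) (hκ : κ = M / m)
    (r : V)
    (estar : V) (hestarK : estar ∈ K) (hestarEq : ∀ φ ∈ K, ⟪A estar, φ⟫ = ⟪r, φ⟫)
    (s : V) (hsK : s ∈ K) (hsEq : ∀ φ ∈ K, ⟪D s, φ⟫ = ⟪r, φ⟫)
    (e : V) (he0 : s = 0 → e = 0)
    (he : s ≠ 0 → e = (⟪r, s⟫ / ⟪A s, s⟫) • s)
    (ε : ℝ) (hε : ε = (κ - 1) / (κ + 1)) :
    (0 ≤ ε ∧ ε < 1) ∧
    Real.sqrt ⟪A (estar - e), estar - e⟫ ≤ ε * Real.sqrt ⟪A estar, estar⟫ ∧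
    Real.sqrt ⟪A (estar - e), estar - e⟫ ≤
      1 / 2 * (κ - 1) * Real.sqrt ⟪A e, e⟫ := by
  have hM : 0 < M := lt_of_lt_of_le hm hmM
  have hκ1 : 1 ≤ κ := by rw [hκ]; exact (one_le_div hm).2 hmM
  have hε0 : 0 ≤ ε := by rw [hε]; apply div_nonneg <;> linarith
  have hε1 : ε < 1 := by rw [hε, div_lt_one (by linarith)]; linarith
  have hAnn : ∀ x : V, 0 ≤ ⟪A x, x⟫ := by
    intro x
    rcases eq_or_ne x 0 with rfl | hx
    · simp
    · exact (hApos x hx).le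
  have hDnn : ∀ x : V, 0 ≤ ⟪D x, x⟫ := by
    intro x
    rcases eq_or_ne x 0 with rfl | hx
    · simp
    · exact (hDpos x hx).le
  refine ⟨⟨hε0, hε1⟩, ?_⟩
  rcases eq_or_ne s 0 with hs | hs
  · -- trivial case: s = 0 forces estar = 0
    have he' : e = 0 := he0 hs
    have hr0 : ⟪r, estar⟫ = (0:ℝ) := by
      rw [← hsEq estar hestarK, hs]; simp
    have ha0 : ⟪A estar, estar⟫ = (0:ℝ) := by
      rw [hestarEq estar hestarK, hr0]
    have hestar0 : estar = 0 := by
      by_contra hne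
      exact absurd ha0 (ne_of_gt (hApos estar hne))
    constructor
    · rw [he', hestar0]; simp
    · rw [he', hestar0]; simp
  · -- main case
    have hc : 0 < ⟪A s, s⟫ := hApos s hs
    have hbpos : 0 < ⟪D s, s⟫ := hDpos s hs
    have hrs : ⟪r, s⟫ = ⟪D s, s⟫ := (hsEq s hsK).symm
    have hAes : ⟪A estar, s⟫ = ⟪D s, s⟫ := by rw [hestarEq s hsK, hrs]
    have hDse : ⟪D s, estar⟫ = ⟪A estar, estar⟫ := by
      rw [hsEq estar hestarK, ← hestarEq estar hestarK]
    have hDes : ⟪D estar, s⟫ = ⟪A estar, estar⟫ := by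
      rw [hDsym estar s, real_inner_comm (D s) estar, hDse]
    have hAse : ⟪A s, estar⟫ = ⟪D s, s⟫ := by
      rw [hAsym s estar, real_inner_comm (A estar) s, hAes]
    -- P = A - m•D and Q = M•D - A, symmetric PSD
    have hPsym : ∀ u w : V, ⟪(A - m • D) u, w⟫ = ⟪u, (A - m • D) w⟫ := by
      intro u w
      simp only [LinearMap.sub_apply, LinearMap.smul_apply, inner_sub_left, inner_sub_right,
        real_inner_smul_left, real_inner_smul_right, hAsym u w, hDsym u w]
    have hPpos : ∀ x : V, 0 ≤ ⟪(A - m • D) x, x⟫ := by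
      intro x
      have h := (hspec x).1
      simp only [LinearMap.sub_apply, LinearMap.smul_apply, inner_sub_left,
        real_inner_smul_left]
      linarith
    have hQsym : ∀ u w : V, ⟪(M • D - A) u, w⟫ = ⟪u, (M • D - A) w⟫ := by
      intro u w
      simp only [LinearMap.sub_apply, LinearMap.smul_apply, inner_sub_left, inner_sub_right,
        real_inner_smul_left, real_inner_smul_right, hAsym u w, hDsym u w]
    have hQpos : ∀ x : V, 0 ≤ ⟪(M • D - A) x, x⟫ := by
      intro x
      have h := (hspec x).2
      simp only [LinearMap.sub_apply, LinearMap.smul_apply, inner_sub_left,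
        real_inner_smul_left]
      linarith
    have hP0 := psd_cs (A - m • D) hPsym hPpos estar s
    have hQ0 := psd_cs (M • D - A) hQsym hQpos estar s
    simp only [LinearMap.sub_apply, LinearMap.smul_apply, inner_sub_left,
      real_inner_smul_left, hAes, hDes] at hP0 hQ0
    -- now hP0 : (⟪D s,s⟫ - m*⟪A estar,estar⟫)^2 ≤ (⟪A estar,estar⟫ - m*⟪D estar,estar⟫)*(⟪A s,s⟫ - m*⟪D s,s⟫)
    have hkey : M*m*⟪A estar, estar⟫ + ⟪A s, s⟫ ≤ (M+m)*⟪D s, s⟫ := by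
      refine key_scalar m M ⟪A estar, estar⟫ ⟪D s, s⟫ ⟪A s, s⟫ ⟪D estar, estar⟫ hm hmM
        (hDnn s) (hDnn estar) (hspec estar).1 (hspec estar).2 (hspec s).1 (hspec s).2 ?_ ?_
      · exact hP0
      · exact hQ0
    have hstar : 4*(M*m)*(⟪A estar, estar⟫*⟪A s, s⟫) ≤ (M+m)^2 * ⟪D s, s⟫^2 := by
      nlinarith [mul_le_mul_of_nonneg_right hkey hc.le, sq_nonneg ((M+m)*⟪D s, s⟫ - 2*⟪A s, s⟫)]
    have he' : e = (⟪D s, s⟫ / ⟪A s, s⟫) • s := by rw [he hs, hrs]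
    have hE : ⟪A (estar - e), estar - e⟫ = ⟪A estar, estar⟫ - ⟪D s, s⟫^2/⟪A s, s⟫ := by
      rw [he']
      simp only [map_sub, map_smul, inner_sub_left, inner_sub_right, real_inner_smul_left,
        real_inner_smul_right, hAes, hAse]
      field_simp
      ring
    have hF : ⟪A e, e⟫ = ⟪D s, s⟫^2/⟪A s, s⟫ := by
      rw [he']
      simp only [map_smul, real_inner_smul_left, real_inner_smul_right]
      field_simp
    have hεq : ε * (M + m) = M - m := by
      have h1 : κ + 1 = (M + m)/m := by rw [hκ]; field_simp
      have h2 : κ - 1 = (M - m)/m := by rw [hκ]; field_simp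
      rw [hε, h1, h2]
      field_simp
    have hE3 : ε^2 * (M+m)^2 = (M-m)^2 := by rw [← hεq]; ring
    have hMm2 : (0:ℝ) < (M+m)^2 := by positivity
    have hEc : ⟪A (estar - e), estar - e⟫ * ⟪A s, s⟫
        = ⟪A estar, estar⟫*⟪A s, s⟫ - ⟪D s, s⟫^2 := by
      rw [hE]; field_simp
    have hfirst : ⟪A (estar - e), estar - e⟫ ≤ ε^2 * ⟪A estar, estar⟫ := by
      apply le_of_mul_le_mul_right _ hc
      rw [hEc]
      nlinarith [hstar, hE3, mul_nonneg (mul_nonneg (hAnn estar) hc.le) hMm2.le,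
        mul_nonneg (hAnn estar) hc.le]
    constructor
    · calc Real.sqrt ⟪A (estar - e), estar - e⟫
          ≤ Real.sqrt (ε^2 * ⟪A estar, estar⟫) := Real.sqrt_le_sqrt hfirst
        _ = ε * Real.sqrt ⟪A estar, estar⟫ := by
            rw [Real.sqrt_mul (sq_nonneg ε), Real.sqrt_sq hε0]
    · have hκm : (κ - 1) * m = M - m := by rw [hκ]; field_simp
      have hκ2 : ((κ-1)*m)^2 = (M-m)^2 := by rw [hκm]
      have hhalf : 0 ≤ 1/2*(κ-1) := by linarith
      have hsecond : ⟪A (estar - e), estar - e⟫ ≤ (1/2*(κ-1))^2 * ⟪A e, e⟫ := by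
        apply le_of_mul_le_mul_right _ hc
        rw [hEc, hF]
        have hFc : (1/2*(κ-1))^2 * (⟪D s, s⟫^2/⟪A s, s⟫) * ⟪A s, s⟫
            = (1/2*(κ-1))^2 * ⟪D s, s⟫^2 := by field_simp
        rw [hFc]
        have h4m : 4*m^2*(⟪A estar, estar⟫*⟪A s, s⟫ - ⟪D s, s⟫^2) ≤ (M-m)^2*⟪D s, s⟫^2 := by
          nlinarith [mul_le_mul_of_nonneg_left hstar hm.le, hM,
            mul_nonneg (mul_nonneg (sub_nonneg.2 hmM) (sq_nonneg (M-m))) (sq_nonneg ⟪D s, s⟫)]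
        nlinarith [h4m, hκ2, mul_pos hm hm, sq_nonneg ⟪D s, s⟫]
      calc Real.sqrt ⟪A (estar - e), estar - e⟫
          ≤ Real.sqrt ((1/2*(κ-1))^2 * ⟪A e, e⟫) := Real.sqrt_le_sqrt hsecond
        _ = 1/2*(κ-1) * Real.sqrt ⟪A e, e⟫ := by
            rw [Real.sqrt_mul (sq_nonneg _), Real.sqrt_sq hhalf]
end

section
/- Assume the decomposition K = Σ_{i=1}^N K_i satisfies (SD) with constant C_A > 0 and (SCS) with constant C_S > 0, and let u ∈ K be the minimizer of E over K ((Au - f, φ) = 0 for all φ ∈ K). Let v_0 = u^k ∈ K and for i = 1, ..., N let e_i* ∈ K_i be the exact correction, (A e_i*, φ) = (f - A v_{i-1}, φ) for all φ ∈ K_i, and let e_i ∈ K_i be an inexact correction satisfying ||e_i* - e_i||_A ≤ (1/2)(κ̄ - 1) ||e_i||_A for a constant κ̄ ≥ 1; set v_i = v_{i-1} + e_i and u^{k+1} = v_N. Then E(u^{k+1}) - E(u) ≤ (1/2) C_A [C_S^{1/2} + (1/2)(κ̄ - 1)]² Σ_{i=1}^N ||e_i||_A². -/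
open RealInnerProductSpace

/-- Upper bound for one SSO sweep with inexact local solvers: under (SD) and (SCS),
if the inexact corrections satisfy `‖e_i* - e_i‖_A ≤ ½(κ̄-1)‖e_i‖_A`, then
`E(u^{k+1}) - E(u) ≤ ½ C_A [√C_S + ½(κ̄-1)]² ∑ ‖e_i‖_A²`. -/
theorem sso_inexact_upper_bound
    {V : Type*} [NormedAddCommGroup V] [InnerProductSpace ℝ V] [CompleteSpace V]
    (A : V →L[ℝ] V) (hAsym : ∀ u v : V, ⟪A u, v⟫ = ⟪u, A v⟫)
    (α : ℝ) (hα : 0 < α) (hAcoer : ∀ v : V, α * ‖v‖ ^ 2 ≤ ⟪A v, v⟫)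
    (f : V)
    (E : V → ℝ) (hE : ∀ w : V, E w = 1 / 2 * ⟪A w, w⟫ - ⟪f, w⟫)
    (K : Submodule ℝ V) (hK : IsClosed ((K : Set V)))
    (N : ℕ) (Ki : Fin N → Submodule ℝ V) (hKi : ∀ i, IsClosed ((Ki i : Set V)))
    (hKiK : ∀ i, Ki i ≤ K)
    (CA : ℝ) (hCA : 0 < CA)
    (hSD : ∀ x ∈ K, ∃ w : Fin N → V, (∀ i, w i ∈ Ki i) ∧ ∑ i, w i = x ∧
      ∑ i, ⟪A (w i), w i⟫ ≤ CA * ⟪A x, x⟫)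
    (CS : ℝ) (hCS : 0 < CS)
    (hSCS : ∀ u' v' : Fin N → V, (∀ i, u' i ∈ Ki i) → (∀ j, v' j ∈ Ki j) →
      ∑ i, ∑ j ∈ Finset.Ioi i, ⟪A (u' i), v' j⟫ ≤
        Real.sqrt CS * Real.sqrt (∑ i, ⟪A (u' i), u' i⟫) *
          Real.sqrt (∑ j, ⟪A (v' j), v' j⟫))
    (u : V) (huK : u ∈ K) (hEuler : ∀ φ ∈ K, ⟪A u - f, φ⟫ = 0)
    (uk : V) (hukK : uk ∈ K)
    (v : ℕ → V) (estar e : Fin N → V)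
    (hv0 : v 0 = uk)
    (hestarK : ∀ i : Fin N, estar i ∈ Ki i)
    (hestarEq : ∀ i : Fin N, ∀ φ ∈ Ki i, ⟪A (estar i), φ⟫ = ⟪f - A (v i), φ⟫)
    (heK : ∀ i : Fin N, e i ∈ Ki i)
    (κbar : ℝ) (hκbar : 1 ≤ κbar)
    (hinexact : ∀ i : Fin N,
      Real.sqrt ⟪A (estar i - e i), estar i - e i⟫ ≤
        1 / 2 * (κbar - 1) * Real.sqrt ⟪A (e i), e i⟫)
    (hvs : ∀ i : Fin N, v ((i : ℕ) + 1) = v i + e i) :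
    E (v N) - E u ≤
      1 / 2 * CA * (Real.sqrt CS + 1 / 2 * (κbar - 1)) ^ 2 *
        ∑ i, ⟪A (e i), e i⟫ := by
  -- basic properties of the bilinear form a(x,y) = ⟪A x, y⟫
  have asymm : ∀ x y : V, ⟪A x, y⟫ = ⟪A y, x⟫ := fun x y => by
    rw [hAsym, real_inner_comm]
  have apos : ∀ x : V, 0 ≤ ⟪A x, x⟫ := fun x =>
    le_trans (by positivity) (hAcoer x)
  have hzero : ∀ x : V, ⟪A x, x⟫ = 0 → x = 0 := by
    intro x hx
    have h1 : α * ‖x‖ ^ 2 ≤ 0 := hx ▸ hAcoer x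
    have h2 : ‖x‖ ^ 2 ≤ 0 := by nlinarith
    have h3 : ‖x‖ ^ 2 = 0 := le_antisymm h2 (sq_nonneg _)
    exact norm_eq_zero.mp ((pow_eq_zero_iff two_ne_zero).mp h3)
  have hexp : ∀ x y : V, ⟪A (x - y), x - y⟫ = ⟪A x, x⟫ - 2 * ⟪A x, y⟫ + ⟪A y, y⟫ := by
    intro x y
    rw [map_sub, inner_sub_left, inner_sub_right, inner_sub_right, asymm y x]
    ring
  -- Cauchy-Schwarz for a
  have aCS : ∀ x y : V, ⟪A x, y⟫ ≤ Real.sqrt ⟪A x, x⟫ * Real.sqrt ⟪A y, y⟫ := by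
    intro x y
    by_cases hy : ⟪A y, y⟫ = 0
    · have : y = 0 := hzero y hy
      simp [this]
    · have hypos : 0 < ⟪A y, y⟫ := lt_of_le_of_ne (apos y) (Ne.symm hy)
      set t : ℝ := ⟪A x, y⟫ / ⟪A y, y⟫ with ht
      have h0 : 0 ≤ ⟪A (x - t • y), x - t • y⟫ := apos _
      have hexp2 : ⟪A (x - t • y), x - t • y⟫
          = ⟪A x, x⟫ - 2 * t * ⟪A x, y⟫ + t ^ 2 * ⟪A y, y⟫ := by
        rw [map_sub, map_smul, inner_sub_left, inner_sub_right, inner_sub_right,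
          inner_smul_left, inner_smul_right, inner_smul_left, inner_smul_right, asymm y x]
        simp [RCLike.conj_to_real]
        ring
      have hsq : ⟪A x, y⟫ ^ 2 ≤ ⟪A x, x⟫ * ⟪A y, y⟫ := by
        rw [hexp2] at h0
        have ht2 : t * ⟪A y, y⟫ = ⟪A x, y⟫ := div_mul_cancel₀ _ hy
        nlinarith [h0, hypos]
      calc ⟪A x, y⟫ ≤ |⟪A x, y⟫| := le_abs_self _
        _ = Real.sqrt (⟪A x, y⟫ ^ 2) := (Real.sqrt_sq_eq_abs _).symm
        _ ≤ Real.sqrt (⟪A x, x⟫ * ⟪A y, y⟫) := Real.sqrt_le_sqrt hsq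
        _ = Real.sqrt ⟪A x, x⟫ * Real.sqrt ⟪A y, y⟫ := Real.sqrt_mul (apos x) _
  -- formula for v n
  have hvsum : ∀ n, n ≤ N →
      v n = uk + ∑ j ∈ Finset.univ.filter (fun j : Fin N => (j : ℕ) < n), e j := by
    intro n hn
    induction n with
    | zero => simp [hv0]
    | succ m ih =>
      have hmN : m < N := hn
      have hvm := ih (le_of_lt hmN)
      have hstep := hvs ⟨m, hmN⟩
      simp only [Fin.val_mk] at hstep
      rw [hstep, hvm]
      have hset : Finset.univ.filter (fun j : Fin N => (j : ℕ) < m + 1)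
          = insert (⟨m, hmN⟩ : Fin N) (Finset.univ.filter (fun j : Fin N => (j : ℕ) < m)) := by
        ext j
        simp only [Finset.mem_filter, Finset.mem_univ, true_and, Finset.mem_insert,
          Nat.lt_succ_iff_lt_or_eq, Fin.ext_iff, Fin.val_mk]
        tauto
      rw [hset, Finset.sum_insert (by simp)]
      abel
  -- v n ∈ K
  have hvK : ∀ n, n ≤ N → v n ∈ K := by
    intro n hn
    rw [hvsum n hn]
    exact K.add_mem hukK (Submodule.sum_mem K fun j _ => hKiK j (heK j))
  set d : V := u - v N with hd
  have hdK : d ∈ K := K.sub_mem huK (hvK N le_rfl)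
  obtain ⟨w, hwKi, hwsum, hwle⟩ := hSD d hdK
  -- key identity for each i
  have hkey : ∀ i : Fin N, ⟪A d, w i⟫
      = ⟪A (estar i - e i), w i⟫ - ∑ j ∈ Finset.Ioi i, ⟪A (e j), w i⟫ := by
    intro i
    have hwiK : w i ∈ K := hKiK i (hwKi i)
    -- v N - v i = ∑_{j ≥ i} e j
    have hvdiff : v N - v (i : ℕ) = ∑ j ∈ Finset.Ici i, e j := by
      rw [hvsum N le_rfl, hvsum (i : ℕ) (le_of_lt i.isLt)]
      have hsplit := Finset.sum_filter_add_sum_filter_not Finset.univ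
        (fun j : Fin N => (j : ℕ) < (i : ℕ)) e
      have hIci : Finset.univ.filter (fun j : Fin N => ¬ (j : ℕ) < (i : ℕ))
          = Finset.Ici i := by
        ext j
        simp only [Finset.mem_filter, Finset.mem_univ, true_and, Finset.mem_Ici,
          not_lt, Fin.le_def]
      rw [hIci] at hsplit
      have : ∀ j : Fin N, ((j : ℕ) < N) = True := fun j => by simp [j.isLt]
      have huniv : Finset.univ.filter (fun j : Fin N => (j : ℕ) < N) = Finset.univ := by
        ext j; simp [j.isLt]
      rw [huniv]
      rw [← hsplit]
      abel
    have hIci2 : Finset.Ici i = insert i (Finset.Ioi i) := by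
      ext j
      simp only [Finset.mem_Ici, Finset.mem_insert, Finset.mem_Ioi]
      constructor
      · intro h
        rcases eq_or_lt_of_le h with h' | h'
        · exact Or.inl h'.symm
        · exact Or.inr h'
      · rintro (rfl | h)
        · exact le_rfl
        · exact le_of_lt h
    -- ⟪A (u - v i), w i⟫ = ⟪A (estar i), w i⟫
    have h1 : ⟪A (u - v (i : ℕ)), w i⟫ = ⟪A (estar i), w i⟫ := by
      have hE1 := hEuler (w i) hwiK
      rw [inner_sub_left] at hE1
      have hE2 := hestarEq i (w i) (hwKi i)
      rw [inner_sub_left] at hE2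
      rw [map_sub, inner_sub_left]
      linarith [hE1, hE2]
    have hdecomp : d = (u - v (i : ℕ)) - (v N - v (i : ℕ)) := by
      rw [hd]; abel
    rw [hdecomp, map_sub, inner_sub_left, h1, hvdiff]
    have h2 : ⟪A (∑ j ∈ Finset.Ici i, e j), w i⟫
        = ⟪A (e i), w i⟫ + ∑ j ∈ Finset.Ioi i, ⟪A (e j), w i⟫ := by
      rw [map_sum, sum_inner, hIci2, Finset.sum_insert (by simp)]
    rw [h2, map_sub, inner_sub_left]
    ring
  -- sum up
  have hdd : ⟪A d, d⟫ = ∑ i, ⟪A d, w i⟫ := by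
    nth_rewrite 2 [← hwsum]
    exact inner_sum _ _ _
  set S : ℝ := ∑ i, ⟪A (e i), e i⟫ with hS
  set W : ℝ := ∑ i, ⟪A (w i), w i⟫ with hW
  set D : ℝ := ⟪A d, d⟫ with hD
  have hSnn : 0 ≤ S := Finset.sum_nonneg fun i _ => apos _
  have hWnn : 0 ≤ W := Finset.sum_nonneg fun i _ => apos _
  have hDnn : 0 ≤ D := apos d
  set c1 : ℝ := 1 / 2 * (κbar - 1) with hc1
  have hc1nn : 0 ≤ c1 := by rw [hc1]; linarith
  -- bound term 1
  have hT1 : ∑ i, ⟪A (estar i - e i), w i⟫ ≤ c1 * Real.sqrt S * Real.sqrt W := by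
    calc ∑ i, ⟪A (estar i - e i), w i⟫
        ≤ ∑ i, Real.sqrt ⟪A (estar i - e i), estar i - e i⟫ * Real.sqrt ⟪A (w i), w i⟫ :=
          Finset.sum_le_sum fun i _ => aCS _ _
      _ ≤ ∑ i, (c1 * Real.sqrt ⟪A (e i), e i⟫) * Real.sqrt ⟪A (w i), w i⟫ := by
          refine Finset.sum_le_sum fun i _ => ?_
          exact mul_le_mul_of_nonneg_right (hinexact i) (Real.sqrt_nonneg _)
      _ = c1 * ∑ i, Real.sqrt ⟪A (e i), e i⟫ * Real.sqrt ⟪A (w i), w i⟫ := by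
          rw [Finset.mul_sum]
          exact Finset.sum_congr rfl fun i _ => by ring
      _ ≤ c1 * (Real.sqrt S * Real.sqrt W) := by
          refine mul_le_mul_of_nonneg_left ?_ hc1nn
          rw [hS, hW]
          exact Real.sum_sqrt_mul_sqrt_le _ (fun i => apos _) (fun i => apos _)
      _ = c1 * Real.sqrt S * Real.sqrt W := by ring
  -- bound term 2 via SCS
  have hT2 : -∑ i, ∑ j ∈ Finset.Ioi i, ⟪A (e j), w i⟫
      ≤ Real.sqrt CS * Real.sqrt W * Real.sqrt S := by
    have := hSCS (fun i => -(w i)) e (fun i => (Ki i).neg_mem (hwKi i)) heK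
    simp only [map_neg, inner_neg_left, inner_neg_neg] at this
    calc -∑ i, ∑ j ∈ Finset.Ioi i, ⟪A (e j), w i⟫
        = ∑ i, ∑ j ∈ Finset.Ioi i, -⟪A (w i), e j⟫ := by
          rw [← Finset.sum_neg_distrib]
          refine Finset.sum_congr rfl fun i _ => ?_
          rw [← Finset.sum_neg_distrib]
          refine Finset.sum_congr rfl fun j _ => ?_
          rw [asymm]
      _ ≤ Real.sqrt CS * Real.sqrt W * Real.sqrt S := by
          rw [hW, hS]
          simpa using this
  -- combine
  have hDle : D ≤ (Real.sqrt CS + c1) * Real.sqrt W * Real.sqrt S := by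
    have : D = (∑ i, ⟪A (estar i - e i), w i⟫)
        + (-∑ i, ∑ j ∈ Finset.Ioi i, ⟪A (e j), w i⟫) := by
      rw [hdd]
      rw [Finset.sum_congr rfl fun i _ => hkey i]
      rw [Finset.sum_sub_distrib]
      ring
    rw [this]
    calc (∑ i, ⟪A (estar i - e i), w i⟫)
          + (-∑ i, ∑ j ∈ Finset.Ioi i, ⟪A (e j), w i⟫)
        ≤ c1 * Real.sqrt S * Real.sqrt W + Real.sqrt CS * Real.sqrt W * Real.sqrt S :=
          add_le_add hT1 hT2
      _ = (Real.sqrt CS + c1) * Real.sqrt W * Real.sqrt S := by ring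
  have hWD : Real.sqrt W ≤ Real.sqrt CA * Real.sqrt D := by
    rw [← Real.sqrt_mul (le_of_lt hCA)]
    exact Real.sqrt_le_sqrt hwle
  set c : ℝ := Real.sqrt CS + c1 with hc
  have hcnn : 0 ≤ c := add_nonneg (Real.sqrt_nonneg _) hc1nn
  have hDle2 : D ≤ c * (Real.sqrt CA * Real.sqrt D) * Real.sqrt S := by
    refine le_trans hDle ?_
    have h1 : c * Real.sqrt W * Real.sqrt S ≤ c * (Real.sqrt CA * Real.sqrt D) * Real.sqrt S := by
      have := mul_le_mul_of_nonneg_left hWD hcnn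
      exact mul_le_mul_of_nonneg_right this (Real.sqrt_nonneg _)
    exact h1
  -- derive D ≤ c^2 * CA * S
  have hfinal : D ≤ c ^ 2 * CA * S := by
    have hx : Real.sqrt D * Real.sqrt D = D := Real.mul_self_sqrt hDnn
    have hy : Real.sqrt CA * Real.sqrt CA = CA := Real.mul_self_sqrt (le_of_lt hCA)
    have hz : Real.sqrt S * Real.sqrt S = S := Real.mul_self_sqrt hSnn
    rcases eq_or_lt_of_le (Real.sqrt_nonneg D) with h0 | hpos
    · have hD0 : D = 0 := by rw [← hx, ← h0]; ring
      rw [hD0]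
      exact mul_nonneg (mul_nonneg (sq_nonneg c) hCA.le) hSnn
    · have h1 : Real.sqrt D * Real.sqrt D
          ≤ (c * Real.sqrt CA * Real.sqrt S) * Real.sqrt D := by
        calc Real.sqrt D * Real.sqrt D = D := hx
          _ ≤ c * (Real.sqrt CA * Real.sqrt D) * Real.sqrt S := hDle2
          _ = (c * Real.sqrt CA * Real.sqrt S) * Real.sqrt D := by ring
      have h2 : Real.sqrt D ≤ c * Real.sqrt CA * Real.sqrt S :=
        le_of_mul_le_mul_right h1 hpos
      calc D = Real.sqrt D * Real.sqrt D := hx.symm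
        _ ≤ (c * Real.sqrt CA * Real.sqrt S) * (c * Real.sqrt CA * Real.sqrt S) :=
            mul_le_mul h2 h2 (Real.sqrt_nonneg _)
              (by positivity)
        _ = c ^ 2 * (Real.sqrt CA * Real.sqrt CA) * (Real.sqrt S * Real.sqrt S) := by ring
        _ = c ^ 2 * CA * S := by rw [hy, hz]
  -- energy identity
  have hEnergy : E (v N) - E u = 1 / 2 * D := by
    have hDval : D = ⟪A u, u⟫ - 2 * ⟪A u, v N⟫ + ⟪A (v N), v N⟫ := by
      rw [hD, hd]; exact hexp u (v N)
    have hEul := hEuler (v N - u) (K.sub_mem (hvK N le_rfl) huK)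
    rw [inner_sub_left, inner_sub_right, inner_sub_right] at hEul
    have hcomm : ⟪A u, v N⟫ = ⟪A (v N), u⟫ := asymm u (v N)
    rw [hE (v N), hE u, hDval]
    -- hEul : ⟪A u, v N⟫ - ⟪A u, u⟫ - (⟪f, v N⟫ - ⟪f, u⟫) = 0
    linarith [hEul, hcomm]
  rw [hEnergy]
  calc 1 / 2 * D ≤ 1 / 2 * (c ^ 2 * CA * S) :=
      mul_le_mul_of_nonneg_left hfinal (by norm_num)
    _ = 1 / 2 * CA * c ^ 2 * S := by ring
end

section
/- Assume the decomposition K = Σ_{i=1}^N K_i satisfies (SD) with constant C_A > 0 and (SCS) with constant C_S > 0, and let u ∈ K be the minimizer of E over K. Consider one sweep of SSO with inexact local solvers: v_0 = u^k ∈ K; for i = 1, ..., N, e_i* ∈ K_i is the exact correction ((A e_i*, φ) = (f - A v_{i-1}, φ) for all φ ∈ K_i), e_i ∈ K_i satisfies both ||e_i* - e_i||_A ≤ (1/2)(κ̄ - 1) ||e_i||_A for a constant κ̄ ≥ 1 and the first-order condition (A v_i - f, e_i) = 0 where v_i = v_{i-1} + e_i; and u^{k+1} = v_N. Then E(u^{k+1})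 - E(u) ≤ ρ [E(u^k) - E(u)] with contraction factor ρ = 1 - 1/(1 + C_A [C_S^{1/2} + (κ̄ - 1)/2]²). -/
open RealInnerProductSpace

/-!
Under the first-order condition every inexact correction lowers the energy by `½‖e_i‖²_A`,
so `E(u^k) - E(u) = ½‖u^{k+1} - u‖²_A + ½ Σ ‖e_i‖²_A`. To bound the error, split
`u^{k+1} - u = Σ w_i` by (SD) and test against each `w_i`: as `u^{k+1} = v_{i+1} + Σ_{j>i} e_j`
and `e_i*` is the exact local correction,
`(u^{k+1} - u, w_i)_A = (e_i - e_i*, w_i)_A + Σ_{j>i} (e_j, w_i)_A`. The inexactness bounds the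
first sum and (SCS) the second, whence `‖u^{k+1} - u‖²_A ≤ C_A [√C_S + (κ̄-1)/2]² Σ ‖e_i‖²_A`,
and the contraction is a rearrangement.
-/

theorem le_sq_of_le_mul_sqrt {a b : ℝ} (ha : 0 ≤ a) (h : a ≤ b * √a) : a ≤ b ^ 2 := by
  nlinarith [sq_nonneg (b - √a), Real.sq_sqrt ha, Real.sqrt_nonneg a]

theorem le_one_sub_one_div_mul_add {x s c : ℝ} (hc : 0 ≤ c) (h : x ≤ c * s) :
    x ≤ (1 - 1 / (1 + c)) * (x + s) := by
  rw [one_sub_div (by positivity), add_sub_cancel_left, div_mul_eq_mul_div,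
    le_div_iff₀ (by positivity)]
  linarith

theorem le_mul_mul_sq_of_le_mul_sqrt_mul_sqrt {W Q S C β : ℝ} (hW : 0 ≤ W) (hS : 0 ≤ S)
    (hC : 0 ≤ C) (hβ : 0 ≤ β) (hQ : Q ≤ C * W) (h : W ≤ β * (√Q * √S)) : W ≤ C * β ^ 2 * S := by
  have hsqrt : W ≤ (β * √C * √S) * √W := calc
    W ≤ β * (√Q * √S) := h
    _ ≤ β * (√(C * W) * √S) := by gcongr
    _ = (β * √C * √S) * √W := by rw [Real.sqrt_mul hC]; ring
  calc W ≤ (β * √C * √S) ^ 2 := le_sq_of_le_mul_sqrt hW hsqrt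
    _ = C * β ^ 2 * S := by rw [mul_pow, mul_pow, Real.sq_sqrt hC, Real.sq_sqrt hS]; ring

theorem add_sum_filter_le_eq_of_succ_eq_add {M : Type*} [AddCommMonoid M] {N : ℕ}
    {x : ℕ → M} {d : Fin N → M} (hx : ∀ i : Fin N, x (i + 1) = x i + d i) {n : ℕ}
    (hn : n ≤ N) : x n + ∑ j ∈ Finset.univ.filter (fun j : Fin N => n ≤ j), d j = x N := by
  induction hn using Nat.decreasingInduction with
  | self =>
    rw [Finset.sum_eq_zero fun j hj => absurd (Finset.mem_filter.1 hj).2 (not_le.2 j.isLt),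
      add_zero]
  | of_succ k hk ih =>
    have hsplit : Finset.univ.filter (fun j : Fin N => k ≤ j) =
        insert ⟨k, hk⟩ (Finset.univ.filter (fun j : Fin N => k + 1 ≤ j)) := by
      ext j; simp only [Finset.mem_filter, Finset.mem_insert, Finset.mem_univ, true_and,
        Fin.ext_iff]; omega
    rw [hsplit, Finset.sum_insert (by simp), ← add_assoc, ← hx ⟨k, hk⟩, ih]

theorem eq_add_sum_of_succ_eq_add {M : Type*} [AddCommMonoid M] {N : ℕ}
    {x : ℕ → M} {d : Fin N → M} (hx : ∀ i : Fin N, x (i + 1) = x i + d i) :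
    x N = x 0 + ∑ j, d j := by
  simpa using (add_sum_filter_le_eq_of_succ_eq_add hx (Nat.zero_le N)).symm

theorem eq_add_sum_Ioi_of_succ_eq_add {M : Type*} [AddCommMonoid M] {N : ℕ}
    {x : ℕ → M} {d : Fin N → M} (hx : ∀ i : Fin N, x (i + 1) = x i + d i) (i : Fin N) :
    x N = x (i + 1) + ∑ j ∈ Finset.Ioi i, d j := by
  rw [← add_sum_filter_le_eq_of_succ_eq_add hx i.isLt]
  congr 2
  ext j
  simp only [Finset.mem_filter, Finset.mem_univ, true_and, Finset.mem_Ioi, Fin.lt_def]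
  omega

section

variable {V : Type*} [NormedAddCommGroup V] [InnerProductSpace ℝ V]

noncomputable def quadraticEnergy (A : V →L[ℝ] V) (f w : V) : ℝ := 1 / 2 * ⟪A w, w⟫ - ⟪f, w⟫

variable {A : V →L[ℝ] V}

theorem ContinuousLinearMap.IsPositive.inner_map_le_sqrt_mul_sqrt (hA : A.IsPositive)
    (x y : V) : ⟪A x, y⟫ ≤ √⟪A x, x⟫ * √⟪A y, y⟫ := by
  have hsq : ⟪A x, y⟫ ^ 2 ≤ ⟪A x, x⟫ * ⟪A y, y⟫ := by
    have := LinearMap.BilinForm.apply_mul_apply_le_of_forall_zero_le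
      ((innerₗ V).comp (A : V →ₗ[ℝ] V)) hA.inner_nonneg_left x y
    simp only [LinearMap.comp_apply, innerₗ_apply_apply, ContinuousLinearMap.coe_coe] at this
    rwa [hA.inner_left_eq_inner_right y x, real_inner_comm (A x) y, ← sq] at this
  rw [← Real.sqrt_mul (hA.inner_nonneg_left x)]
  exact Real.le_sqrt_of_sq_le hsq

theorem ContinuousLinearMap.IsPositive.sum_inner_map_le_of_sqrt_le {ι : Type*} [Fintype ι]
    (hA : A.IsPositive) {c : ℝ} (hc : 0 ≤ c) {d e : ι → V}
    (hde : ∀ i, √⟪A (d i), d i⟫ ≤ c * √⟪A (e i), e i⟫) (w : ι → V) :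
    ∑ i, ⟪A (d i), w i⟫ ≤ c * (√(∑ i, ⟪A (e i), e i⟫) * √(∑ i, ⟪A (w i), w i⟫)) :=
  calc ∑ i, ⟪A (d i), w i⟫
      ≤ ∑ i, c * (√⟪A (e i), e i⟫ * √⟪A (w i), w i⟫) := by
        gcongr with i
        rw [← mul_assoc]
        exact (hA.inner_map_le_sqrt_mul_sqrt _ _).trans
          (mul_le_mul_of_nonneg_right (hde i) (Real.sqrt_nonneg _))
    _ ≤ c * (√(∑ i, ⟪A (e i), e i⟫) * √(∑ i, ⟪A (w i), w i⟫)) := by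
        rw [← Finset.mul_sum]
        exact mul_le_mul_of_nonneg_left (Real.sum_sqrt_mul_sqrt_le _
          (fun i => hA.inner_nonneg_left _) (fun i => hA.inner_nonneg_left _)) hc

theorem quadraticEnergy_add (hA : (A : V →ₗ[ℝ] V).IsSymmetric) (f v e : V) :
    quadraticEnergy A f (v + e) = quadraticEnergy A f v + ⟪A v - f, e⟫ + 1 / 2 * ⟪A e, e⟫ := by
  have hsymm : ⟪A e, v⟫ = ⟪A v, e⟫ := by rw [hA.apply_clm, real_inner_comm]
  simp only [quadraticEnergy, map_add, inner_add_left, inner_add_right, inner_sub_left, hsymm]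
  ring

theorem quadraticEnergy_add_of_inner_eq_zero (hA : (A : V →ₗ[ℝ] V).IsSymmetric) {f v e : V}
    (h : ⟪A (v + e) - f, e⟫ = 0) :
    quadraticEnergy A f (v + e) = quadraticEnergy A f v - 1 / 2 * ⟪A e, e⟫ := by
  rw [map_add, add_sub_right_comm, inner_add_left] at h
  rw [quadraticEnergy_add hA]
  linarith

theorem quadraticEnergy_sub_of_inner_eq_zero (hA : (A : V →ₗ[ℝ] V).IsSymmetric) {f u w : V}
    (h : ⟪A u - f, w - u⟫ = 0) :
    quadraticEnergy A f w - quadraticEnergy A f u = 1 / 2 * ⟪A (w - u), w - u⟫ := by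
  conv_lhs => rw [← add_sub_cancel u w, quadraticEnergy_add hA, h]
  ring

theorem inner_map_sweep_error_eq {N : ℕ} {f u : V} {v : ℕ → V} {e : Fin N → V}
    (hvs : ∀ i : Fin N, v (i + 1) = v i + e i) (i : Fin N) {estar x : V}
    (hu : ⟪A u - f, x⟫ = 0) (hestar : ⟪A estar, x⟫ = ⟪f - A (v i), x⟫) :
    ⟪A (v N - u), x⟫ = ⟪A (e i - estar), x⟫ + ∑ j ∈ Finset.Ioi i, ⟪A (e j), x⟫ := by
  rw [eq_add_sum_Ioi_of_succ_eq_add hvs i, hvs i, ← sum_inner, ← map_sum]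
  simp only [map_add, map_sub, inner_add_left, inner_sub_left] at hu hestar ⊢
  linarith

theorem sweep_error_sq_le {N : ℕ} (hA : A.IsPositive) {Ki : Fin N → Submodule ℝ V} {CS : ℝ}
    (hSCS : ∀ u' v' : Fin N → V, (∀ i, u' i ∈ Ki i) → (∀ j, v' j ∈ Ki j) →
      ∑ i, ∑ j ∈ Finset.Ioi i, ⟪A (u' i), v' j⟫ ≤
        √CS * √(∑ i, ⟪A (u' i), u' i⟫) * √(∑ j, ⟪A (v' j), v' j⟫))
    {f u : V} (hu : ∀ i, ∀ φ ∈ Ki i, ⟪A u - f, φ⟫ = 0)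
    {v : ℕ → V} {estar e : Fin N → V}
    (hestarEq : ∀ i : Fin N, ∀ φ ∈ Ki i, ⟪A (estar i), φ⟫ = ⟪f - A (v i), φ⟫)
    (heK : ∀ i, e i ∈ Ki i) {κbar : ℝ} (hκbar : 1 ≤ κbar)
    (hinexact : ∀ i, √⟪A (estar i - e i), estar i - e i⟫ ≤ 1 / 2 * (κbar - 1) * √⟪A (e i), e i⟫)
    (hvs : ∀ i : Fin N, v (i + 1) = v i + e i)
    {w : Fin N → V} (hwK : ∀ i, w i ∈ Ki i) (hwsum : ∑ i, w i = v N - u) :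
    ⟪A (v N - u), v N - u⟫ ≤
      (√CS + (κbar - 1) / 2) * (√(∑ i, ⟪A (w i), w i⟫) * √(∑ i, ⟪A (e i), e i⟫)) := by
  have hsplit : ⟪A (v N - u), v N - u⟫ =
      ∑ i, ⟪A (e i - estar i), w i⟫ + ∑ i, ∑ j ∈ Finset.Ioi i, ⟪A (w i), e j⟫ := by
    rw [← Finset.sum_add_distrib]
    nth_rewrite 2 [← hwsum]
    rw [inner_sum]
    refine Finset.sum_congr rfl fun i _ => ?_
    rw [inner_map_sweep_error_eq hvs i (hu i _ (hwK i)) (hestarEq i _ (hwK i))]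
    congr 1
    exact Finset.sum_congr rfl fun j _ => by rw [hA.inner_left_eq_inner_right, real_inner_comm]
  have hdefect : ∀ i, √⟪A (e i - estar i), e i - estar i⟫ ≤ (κbar - 1) / 2 * √⟪A (e i), e i⟫ :=
    fun i => by rw [← neg_sub, map_neg, inner_neg_neg]; linarith [hinexact i]
  rw [hsplit]
  calc _ ≤ (κbar - 1) / 2 * (√(∑ i, ⟪A (e i), e i⟫) * √(∑ i, ⟪A (w i), w i⟫)) +
        √CS * √(∑ i, ⟪A (w i), w i⟫) * √(∑ i, ⟪A (e i), e i⟫) :=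
      add_le_add (hA.sum_inner_map_le_of_sqrt_le (by linarith) hdefect w) (hSCS w e hwK heK)
    _ = _ := by ring

end

theorem sso_inexact_contraction_general
    {V : Type*} [NormedAddCommGroup V] [InnerProductSpace ℝ V]
    (A : V →L[ℝ] V) (hAsym : ∀ u v : V, ⟪A u, v⟫ = ⟪u, A v⟫)
    (α : ℝ) (hα : 0 < α) (hAcoer : ∀ v : V, α * ‖v‖ ^ 2 ≤ ⟪A v, v⟫)
    (f : V)
    (E : V → ℝ) (hE : ∀ w : V, E w = 1 / 2 * ⟪A w, w⟫ - ⟪f, w⟫)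
    (K : Submodule ℝ V)
    (N : ℕ) (Ki : Fin N → Submodule ℝ V)
    (hKiK : ∀ i, Ki i ≤ K)
    (CA : ℝ) (hCA : 0 < CA)
    (hSD : ∀ x ∈ K, ∃ w : Fin N → V, (∀ i, w i ∈ Ki i) ∧ ∑ i, w i = x ∧
      ∑ i, ⟪A (w i), w i⟫ ≤ CA * ⟪A x, x⟫)
    (CS : ℝ)
    (hSCS : ∀ u' v' : Fin N → V, (∀ i, u' i ∈ Ki i) → (∀ j, v' j ∈ Ki j) →
      ∑ i, ∑ j ∈ Finset.Ioi i, ⟪A (u' i), v' j⟫ ≤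
        Real.sqrt CS * Real.sqrt (∑ i, ⟪A (u' i), u' i⟫) *
          Real.sqrt (∑ j, ⟪A (v' j), v' j⟫))
    (u : V) (huK : u ∈ K) (hEuler : ∀ φ ∈ K, ⟪A u - f, φ⟫ = 0)
    (uk : V) (hukK : uk ∈ K)
    (v : ℕ → V) (estar e : Fin N → V)
    (hv0 : v 0 = uk)
    (hestarEq : ∀ i : Fin N, ∀ φ ∈ Ki i, ⟪A (estar i), φ⟫ = ⟪f - A (v i), φ⟫)
    (heK : ∀ i : Fin N, e i ∈ Ki i)
    (κbar : ℝ) (hκbar : 1 ≤ κbar)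
    (hinexact : ∀ i : Fin N,
      Real.sqrt ⟪A (estar i - e i), estar i - e i⟫ ≤
        1 / 2 * (κbar - 1) * Real.sqrt ⟪A (e i), e i⟫)
    (hvs : ∀ i : Fin N, v ((i : ℕ) + 1) = v i + e i)
    (hfoc : ∀ i : Fin N, ⟪A (v ((i : ℕ) + 1)) - f, e i⟫ = 0)
    (ρ : ℝ)
    (hρ : ρ = 1 - 1 / (1 + CA * (Real.sqrt CS + (κbar - 1) / 2) ^ 2)) :
    E (v N) - E u ≤ ρ * (E uk - E u) := by
  have hA : A.IsPositive :=
    (A.isPositive_iff).2 ⟨hAsym, fun x => (by positivity : 0 ≤ α * ‖x‖ ^ 2).trans (hAcoer x)⟩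
  obtain rfl : E = quadraticEnergy A f := funext hE
  have hvN : v N = uk + ∑ i, e i := hv0 ▸ eq_add_sum_of_succ_eq_add hvs
  have hvNK : v N ∈ K := hvN ▸ K.add_mem hukK (K.sum_mem fun i _ => hKiK i (heK i))
  have hEvN : quadraticEnergy A f (v N) = quadraticEnergy A f uk + ∑ i, -(1 / 2 * ⟪A (e i), e i⟫) :=
    hv0 ▸ eq_add_sum_of_succ_eq_add (x := fun n => quadraticEnergy A f (v n)) fun i => by
      simp only [hvs i, quadraticEnergy_add_of_inner_eq_zero hA.isSymmetric (hvs i ▸ hfoc i),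
        sub_eq_add_neg]
  obtain ⟨w, hwK, hwsum, hwbound⟩ := hSD _ (K.sub_mem hvNK huK)
  have hW := le_mul_mul_sq_of_le_mul_sqrt_mul_sqrt (hA.inner_nonneg_left _)
    (Finset.sum_nonneg fun i _ => hA.inner_nonneg_left (e i)) hCA.le
    (by linarith [Real.sqrt_nonneg CS]) hwbound
    (sweep_error_sq_le hA hSCS (fun i φ hφ => hEuler φ (hKiK i hφ)) hestarEq heK hκbar
      hinexact hvs hwK hwsum)
  have hEnergy : ∀ x ∈ K, quadraticEnergy A f x - quadraticEnergy A f u =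
      1 / 2 * ⟪A (x - u), x - u⟫ := fun x hx =>
    quadraticEnergy_sub_of_inner_eq_zero hA.isSymmetric (hEuler _ (K.sub_mem hx huK))
  have hEuk : quadraticEnergy A f uk - quadraticEnergy A f u =
      1 / 2 * ⟪A (v N - u), v N - u⟫ + 1 / 2 * ∑ i, ⟪A (e i), e i⟫ := by
    rw [Finset.sum_neg_distrib, ← Finset.mul_sum] at hEvN
    linarith [hEnergy _ hvNK, hEnergy _ hukK]
  rw [hρ, hEnergy _ hvNK, hEuk]
  exact le_one_sub_one_div_mul_add (by positivity) (by linarith)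

/-- Contraction of one SSO sweep with inexact local solvers: under (SD) and (SCS),
if the inexact corrections satisfy `‖e_i* - e_i‖_A ≤ ½(κ̄-1)‖e_i‖_A` and the
first-order condition `(A v_i - f, e_i) = 0`, then
`E(u^{k+1}) - E(u) ≤ ρ [E(u^k) - E(u)]` with
`ρ = 1 - 1/(1 + C_A [√C_S + (κ̄-1)/2]²)`. -/
theorem sso_inexact_contraction
    {V : Type*} [NormedAddCommGroup V] [InnerProductSpace ℝ V] [CompleteSpace V]
    (A : V →L[ℝ] V) (hAsym : ∀ u v : V, ⟪A u, v⟫ = ⟪u, A v⟫)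
    (α : ℝ) (hα : 0 < α) (hAcoer : ∀ v : V, α * ‖v‖ ^ 2 ≤ ⟪A v, v⟫)
    (f : V)
    (E : V → ℝ) (hE : ∀ w : V, E w = 1 / 2 * ⟪A w, w⟫ - ⟪f, w⟫)
    (K : Submodule ℝ V) (hK : IsClosed ((K : Set V)))
    (N : ℕ) (Ki : Fin N → Submodule ℝ V) (hKi : ∀ i, IsClosed ((Ki i : Set V)))
    (hKiK : ∀ i, Ki i ≤ K)
    (CA : ℝ) (hCA : 0 < CA)
    (hSD : ∀ x ∈ K, ∃ w : Fin N → V, (∀ i, w i ∈ Ki i) ∧ ∑ i, w i = x ∧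
      ∑ i, ⟪A (w i), w i⟫ ≤ CA * ⟪A x, x⟫)
    (CS : ℝ) (hCS : 0 < CS)
    (hSCS : ∀ u' v' : Fin N → V, (∀ i, u' i ∈ Ki i) → (∀ j, v' j ∈ Ki j) →
      ∑ i, ∑ j ∈ Finset.Ioi i, ⟪A (u' i), v' j⟫ ≤
        Real.sqrt CS * Real.sqrt (∑ i, ⟪A (u' i), u' i⟫) *
          Real.sqrt (∑ j, ⟪A (v' j), v' j⟫))
    (u : V) (huK : u ∈ K) (hEuler : ∀ φ ∈ K, ⟪A u - f, φ⟫ = 0)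
    (uk : V) (hukK : uk ∈ K)
    (v : ℕ → V) (estar e : Fin N → V)
    (hv0 : v 0 = uk)
    (hestarK : ∀ i : Fin N, estar i ∈ Ki i)
    (hestarEq : ∀ i : Fin N, ∀ φ ∈ Ki i, ⟪A (estar i), φ⟫ = ⟪f - A (v i), φ⟫)
    (heK : ∀ i : Fin N, e i ∈ Ki i)
    (κbar : ℝ) (hκbar : 1 ≤ κbar)
    (hinexact : ∀ i : Fin N,
      Real.sqrt ⟪A (estar i - e i), estar i - e i⟫ ≤
        1 / 2 * (κbar - 1) * Real.sqrt ⟪A (e i), e i⟫)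
    (hvs : ∀ i : Fin N, v ((i : ℕ) + 1) = v i + e i)
    (hfoc : ∀ i : Fin N, ⟪A (v ((i : ℕ) + 1)) - f, e i⟫ = 0)
    (ρ : ℝ)
    (hρ : ρ = 1 - 1 / (1 + CA * (Real.sqrt CS + (κbar - 1) / 2) ^ 2)) :
    E (v N) - E u ≤ ρ * (E uk - E u) :=
  sso_inexact_contraction_general A hAsym α hα hAcoer f E hE K N Ki hKiK CA hCA hSD CS hSCS u huK
    hEuler uk hukK v estar e hv0 hestarEq heK κbar hκbar hinexact hvs hfoc ρ hρ
end
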